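/- arXiv:2309.08298 — 9 statements merged into one kernel-verified Lean document; each statement's English description precedes it below -/
import Mathlib

section
/- For every a ≥ 0 and every δ ∈ (0,1), the eigenvalue function satisfies the two-sided bound δ·(min_{[1−δ,1]} K)·((1/2)e^{(1−δ)aL} − 1) ≤ φ_L(a) ≤ e^{aL} − 1; in particular φ_L(a) grows exponentially as a → +∞. -/
open MeasureTheory Real Set

/-- for every `a ≥ 0` and `δ ∈ (0,1)`,
`δ * (min_{[1-δ,1]} K) * ((1/2) * exp ((1-δ)*a*L) - 1) ≤ φ_L a ≤ exp (a*L) - 1`,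
so `φ_L` grows exponentially at `+∞`. -/
theorem phiL_exponential_bounds
    (K : ℝ → ℝ) (hK_even : ∀ x, K (-x) = K x) (hK_smooth : ContDiff ℝ (⊤ : ℕ∞) K)
    (hK_nonneg : ∀ x, 0 ≤ K x) (hK_supp : ∀ x, x ∉ Icc (-1 : ℝ) 1 → K x = 0)
    (hK_mass : ∫ x, K x = 1)
    (L : ℝ) (hL : 0 < L)
    (KL : ℝ → ℝ) (hKL : ∀ x, KL x = (1 / L) * K (x / L))
    (φ : ℝ → ℝ) (hφ : ∀ a, φ a = ∫ z, KL z * (Real.exp (a * z) - 1)) :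
    ∀ a : ℝ, 0 ≤ a → ∀ δ : ℝ, 0 < δ → δ < 1 →
      δ * (sInf (K '' Icc (1 - δ) 1)) * ((1 / 2) * Real.exp ((1 - δ) * a * L) - 1) ≤ φ a
      ∧ φ a ≤ Real.exp (a * L) - 1 := by
  have hL' : L ≠ 0 := ne_of_gt hL
  have hKcont : Continuous K := hK_smooth.continuous
  -- generic integrability for K * continuous
  have hint : ∀ G : ℝ → ℝ, Continuous G → Integrable (fun y => K y * G y) := by
    intro G hG
    have hc : Continuous (fun y => K y * G y) := hKcont.mul hG
    have hsupp : HasCompactSupport (fun y => K y * G y) := by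
      apply HasCompactSupport.intro (isCompact_Icc (a := (-1:ℝ)) (b := 1))
      intro x hx
      simp [hK_supp x hx]
    exact hc.integrable_of_hasCompactSupport hsupp
  intro a ha δ hδ0 hδ1
  have haL : 0 ≤ a * L := mul_nonneg ha hL.le
  set g : ℝ → ℝ := fun y => K y * (Real.exp (a * L * y) - 1) with hg
  have hgcont : Continuous (fun y => Real.exp (a * L * y) - 1) := by
    exact (Real.continuous_exp.comp (continuous_const.mul continuous_id)).sub continuous_const
  have hgint : Integrable g := hint _ hgcont
  have hφa : φ a = ∫ y, g y := by
    rw [hφ]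
    have h1 : ∀ z, KL z * (Real.exp (a * z) - 1) = (1 / L) * g (z / L) := by
      intro z
      rw [hKL]
      have : a * L * (z / L) = a * z := by field_simp
      simp only [hg, this]
      ring
    simp_rw [h1]
    rw [integral_const_mul, MeasureTheory.Measure.integral_comp_div g L, abs_of_pos hL, smul_eq_mul]
    field_simp
  -- symmetrized form
  set h : ℝ → ℝ := fun y =>
    K y * ((Real.exp (a * L * y) + Real.exp (-(a * L * y))) / 2 - 1) with hh
  have hhint : Integrable h := by
    apply hint
    exact (((Real.continuous_exp.comp (continuous_const.mul continuous_id)).add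
      (Real.continuous_exp.comp ((continuous_const.mul continuous_id).neg))).div_const 2).sub
      continuous_const
  have hgnegint : Integrable (fun y => g (-y)) := by
    have : (fun y => g (-y)) = fun y => K y * (Real.exp (-(a * L * y)) - 1) := by
      funext y
      simp only [hg, hK_even y, mul_neg]
    rw [this]
    exact hint _ ((Real.continuous_exp.comp ((continuous_const.mul continuous_id).neg)).sub
      continuous_const)
  have hφh : φ a = ∫ y, h y := by
    have hneg : ∫ y, g (-y) = ∫ y, g y := integral_neg_eq_self g volume
    have : (2 : ℝ) * φ a = 2 * ∫ y, h y := by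
      calc (2:ℝ) * φ a = (∫ y, g y) + ∫ y, g (-y) := by rw [hφa, hneg]; ring
        _ = ∫ y, (g y + g (-y)) := (integral_add hgint hgnegint).symm
        _ = ∫ y, 2 * h y := by
            congr 1; funext y
            simp only [hg, hh, hK_even y, mul_neg]
            ring
        _ = 2 * ∫ y, h y := integral_const_mul 2 h
    linarith
  have hh_nonneg : ∀ y, 0 ≤ h y := by
    intro y
    apply mul_nonneg (hK_nonneg y)
    have h1 := Real.add_one_le_exp (a * L * y)
    have h2 := Real.add_one_le_exp (-(a * L * y))
    linarith
  constructor
  · -- lower bound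
    set m := sInf (K '' Icc (1 - δ) 1) with hm
    have hne : (Icc (1 - δ) 1).Nonempty := nonempty_Icc.2 (by linarith)
    have hbdd : BddBelow (K '' Icc (1 - δ) 1) := by
      refine ⟨0, ?_⟩
      rintro _ ⟨x, -, rfl⟩
      exact hK_nonneg x
    have hm0 : 0 ≤ m := le_csInf (hne.image K) (by rintro _ ⟨x, -, rfl⟩; exact hK_nonneg x)
    have hmle : ∀ y ∈ Icc (1 - δ) 1, m ≤ K y := fun y hy => csInf_le hbdd ⟨y, hy, rfl⟩
    set c : ℝ := (1 / 2) * Real.exp ((1 - δ) * a * L) - 1 with hc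
    have hpt : ∀ y ∈ Icc (1 - δ) 1, m * c ≤ h y := by
      intro y hy
      by_cases hcpos : 0 ≤ c
      · have hyz : (1 - δ) * a * L ≤ a * L * y := by nlinarith [hy.1, hy.2]
        have hexp : Real.exp ((1 - δ) * a * L) ≤ Real.exp (a * L * y) := Real.exp_le_exp.2 hyz
        have hexp2 : 0 ≤ Real.exp (-(a * L * y)) := (Real.exp_pos _).le
        have hstuff : c ≤ (Real.exp (a * L * y) + Real.exp (-(a * L * y))) / 2 - 1 := by
          simp only [hc]; linarith
        exact mul_le_mul (hmle y hy) hstuff hcpos (hK_nonneg y)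
      · have : m * c ≤ 0 := mul_nonpos_of_nonneg_of_nonpos hm0 (le_of_not_ge hcpos)
        exact this.trans (hh_nonneg y)
    have hstep1 : δ * m * c ≤ ∫ y in Icc (1 - δ) 1, h y := by
      have hconst : ∫ _y in Icc (1 - δ) 1, (m * c) = δ * (m * c) := by
        rw [setIntegral_const, measureReal_def, Real.volume_Icc, smul_eq_mul]
        rw [ENNReal.toReal_ofReal (by linarith)]
        ring_nf
      have hmono : ∫ _y in Icc (1 - δ) 1, (m * c) ≤ ∫ y in Icc (1 - δ) 1, h y := by
        apply setIntegral_mono_on (integrableOn_const (by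
          rw [Real.volume_Icc]; exact ENNReal.ofReal_ne_top)) hhint.integrableOn
          measurableSet_Icc hpt
      calc δ * m * c = δ * (m * c) := by ring
        _ = ∫ _y in Icc (1 - δ) 1, (m * c) := hconst.symm
        _ ≤ _ := hmono
    have hstep2 : ∫ y in Icc (1 - δ) 1, h y ≤ ∫ y, h y :=
      setIntegral_le_integral hhint (Filter.Eventually.of_forall hh_nonneg)
    rw [hφh]
    exact hstep1.trans hstep2
  · -- upper bound
    have hKint : Integrable K := by
      have := hint (fun _ => (1:ℝ)) continuous_const
      simpa using this
    have hconst : ∫ y, K y * (Real.exp (a * L) - 1) = Real.exp (a * L) - 1 := by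
      rw [integral_mul_const, hK_mass, one_mul]
    have hdiff : 0 ≤ ∫ y, (K y * (Real.exp (a * L) - 1) - g y) := by
      apply integral_nonneg
      intro y
      by_cases hy : y ≤ 1
      · have : a * L * y ≤ a * L := by nlinarith
        have hexp : Real.exp (a * L * y) ≤ Real.exp (a * L) := Real.exp_le_exp.2 this
        simp only [hg]
        have : K y * (Real.exp (a * L) - 1) - K y * (Real.exp (a * L * y) - 1)
            = K y * (Real.exp (a * L) - Real.exp (a * L * y)) := by ring
        rw [this]
        exact mul_nonneg (hK_nonneg y) (by linarith)
      · have hK0 : K y = 0 := hK_supp y (by simp [mem_Icc]; intro; linarith)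
        simp [hg, hK0]
    rw [integral_sub (hint _ continuous_const) hgint, hconst] at hdiff
    rw [hφa]
    linarith
end

section
/- The function ψ(a) := φ_L(a)/a is strictly increasing on (0, +∞), with ψ(a) → 0 as a → 0⁺ and ψ(a) → +∞ as a → +∞. Consequently, for every c > 0 and D > 0 there exists a unique a_0(c,D) > 0 satisfying D·φ_L(a_0(c,D)) = c·a_0(c,D). -/
open MeasureTheory Real Set Filter

lemma aux_key_strict {s : ℝ} (hs : 0 < s) : Real.cosh s - 1 < s * Real.sinh s := by
  have hA := Real.add_one_lt_exp (ne_of_gt hs)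
  have hB := Real.add_one_lt_exp (ne_of_lt (neg_neg_iff_pos.mpr hs) : -s ≠ 0)
  have hAB : Real.exp s * Real.exp (-s) = 1 := by rw [← Real.exp_add]; simp
  have hApos := Real.exp_pos s
  have hBpos := Real.exp_pos (-s)
  rw [Real.cosh_eq, Real.sinh_eq]
  nlinarith [mul_pos hApos hs, mul_lt_mul_of_pos_left hB hApos, mul_lt_mul_of_pos_left hA hBpos]

lemma aux_key_bound {t : ℝ} : Real.cosh t - 1 ≤ t ^ 2 * Real.exp |t| := by
  wlog ht : 0 ≤ t with H
  · have := H (t := -t) (by linarith [le_of_not_ge ht])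
    simpa [Real.cosh_neg] using this
  have hA := Real.add_one_le_exp t
  have hB := Real.add_one_le_exp (-t)
  have hAB : Real.exp t * Real.exp (-t) = 1 := by rw [← Real.exp_add]; simp
  have hApos := Real.exp_pos t
  have hBpos := Real.exp_pos (-t)
  rw [Real.cosh_eq, abs_of_nonneg ht]
  nlinarith [mul_le_mul_of_nonneg_left hB hApos.le, sq_nonneg (Real.exp t - 1 - t), sq_nonneg t,
    mul_nonneg (mul_nonneg (sq_nonneg t) hApos.le) ht]

lemma aux_G_strictMono : StrictMonoOn (fun t => (Real.cosh t - 1) / t) (Ioi (0:ℝ)) := by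
  have h : ∀ t ∈ Ioi (0:ℝ), HasDerivAt (fun t => (Real.cosh t - 1) / t)
      ((Real.sinh t * t - (Real.cosh t - 1) * 1) / t ^ 2) t := by
    intro t ht
    exact ((Real.hasDerivAt_cosh t).sub_const 1).div (hasDerivAt_id t) (ne_of_gt ht)
  have hc : ContinuousOn (fun t => (Real.cosh t - 1) / t) (Ioi (0:ℝ)) :=
    fun t ht => ((h t ht).continuousAt).continuousWithinAt
  apply strictMonoOn_of_deriv_pos (convex_Ioi 0) hc
  intro t ht
  rw [interior_Ioi] at ht
  rw [(h t ht).deriv]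
  have hk := aux_key_strict ht
  have ht' : (0:ℝ) < t := ht
  apply div_pos (by nlinarith) (by positivity)

/-- `ψ a = φ_L a / a` is strictly increasing on `(0, ∞)`, tends to `0` as
`a → 0⁺` and to `+∞` as `a → +∞`; consequently for every `c > 0`, `D > 0` there is a unique
`a₀ > 0` with `D * φ_L a₀ = c * a₀`. -/
theorem psi_strictMono_and_unique_positive_root
    (K : ℝ → ℝ) (hK_even : ∀ x, K (-x) = K x) (hK_smooth : ContDiff ℝ (⊤ : ℕ∞) K)
    (hK_nonneg : ∀ x, 0 ≤ K x) (hK_supp : ∀ x, x ∉ Icc (-1 : ℝ) 1 → K x = 0)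
    (hK_mass : ∫ x, K x = 1)
    (L : ℝ) (hL : 0 < L)
    (KL : ℝ → ℝ) (hKL : ∀ x, KL x = (1 / L) * K (x / L))
    (φ : ℝ → ℝ) (hφ : ∀ a, φ a = ∫ z, KL z * (Real.exp (a * z) - 1)) :
    StrictMonoOn (fun a => φ a / a) (Ioi (0 : ℝ))
    ∧ Tendsto (fun a => φ a / a) (nhdsWithin 0 (Ioi (0 : ℝ))) (nhds 0)
    ∧ Tendsto (fun a => φ a / a) atTop atTop
    ∧ ∀ c : ℝ, 0 < c → ∀ D : ℝ, 0 < D →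
        ∃! a : ℝ, 0 < a ∧ D * φ a = c * a := by
  -- ## Basic properties of `KL`
  have hKcont : Continuous K := hK_smooth.continuous
  have hKLc : Continuous KL := by
    have : Continuous fun x => (1/L) * K (x/L) := by fun_prop
    exact (funext hKL : KL = _) ▸ this
  have hKLnn : ∀ x, 0 ≤ KL x := fun x => by
    rw [hKL]
    exact mul_nonneg (by positivity) (hK_nonneg _)
  have hKLsupp : ∀ x, x ∉ Icc (-L) L → KL x = 0 := by
    intro x hx
    rw [hKL, hK_supp (x/L), mul_zero]
    intro ⟨h1, h2⟩
    rw [neg_le, ← neg_div] at h1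
    exact hx ⟨by nlinarith [(div_le_one hL).mp h1], by nlinarith [(div_le_one hL).mp h2]⟩
  have hKLcs : HasCompactSupport KL := HasCompactSupport.intro isCompact_Icc hKLsupp
  have hKLint : Integrable KL := hKLc.integrable_of_hasCompactSupport hKLcs
  have hKLeven : ∀ x, KL (-x) = KL x := fun x => by
    rw [hKL, hKL, neg_div, hK_even]
  have hKLmass : ∫ z, KL z = 1 := by
    have h : (∫ z, KL z) = ∫ z, (1/L) * K (z/L) := by simp_rw [hKL]
    rw [h, integral_const_mul, MeasureTheory.Measure.integral_comp_div K L, hK_mass,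
      abs_of_pos hL]
    simp [ne_of_gt hL]
  have hKLbd : ∀ x, KL x ≠ 0 → |x| ≤ L := by
    intro x hx
    by_contra h
    push_neg at h
    exact hx (hKLsupp x (fun hmem => absurd (abs_le.mpr ⟨hmem.1, hmem.2⟩) h.not_ge))
  -- ## Generic integrability
  have hint : ∀ g : ℝ → ℝ, Continuous g → Integrable (fun z => KL z * g z) := by
    intro g hg
    exact (hKLc.mul hg).integrable_of_hasCompactSupport (hKLcs.mul_right)
  -- ## cosh representation of φ
  have hφc : ∀ a, φ a = ∫ z, KL z * (Real.cosh (a*z) - 1) := by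
    intro a
    have i1 : Integrable (fun z => KL z * (Real.exp (a*z) - 1)) := hint _ (by fun_prop)
    have i2 : Integrable (fun z => KL z * (Real.exp (-(a*z)) - 1)) := hint _ (by fun_prop)
    have hsym : ∫ z, KL z * (Real.exp (a*z) - 1) = ∫ z, KL z * (Real.exp (-(a*z)) - 1) := by
      rw [← integral_neg_eq_self (fun z => KL z * (Real.exp (-(a*z)) - 1))]
      congr 1
      funext z
      rw [hKLeven]
      ring_nf
    have hptw : ∀ z, KL z * (Real.cosh (a*z) - 1)
        = (KL z * (Real.exp (a*z) - 1) + KL z * (Real.exp (-(a*z)) - 1)) / 2 := by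
      intro z; rw [Real.cosh_eq]; ring
    rw [hφ]
    simp_rw [hptw]
    rw [integral_div, integral_add i1 i2, ← hsym]
    ring
  -- ## a positive point of `KL` away from `0`
  have hx0 : ∃ x : ℝ, x ≠ 0 ∧ 0 < K x := by
    by_contra h
    push_neg at h
    have hz : ∀ x : ℝ, x ≠ 0 → K x = 0 := fun x hx => le_antisymm (h x hx) (hK_nonneg x)
    have hKz : (∫ x, K x) = 0 := by
      have hae : K =ᵐ[volume] 0 := by
        refine measure_mono_null (fun x hx => ?_) (measure_singleton (0:ℝ))
        simp only [mem_setOf_eq] at hx ⊢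
        by_contra hx0
        exact hx (hz x hx0)
      rw [integral_congr_ae hae]; simp
    rw [hK_mass] at hKz
    norm_num at hKz
  obtain ⟨x₀, hx₀ne, hx₀pos⟩ := hx0
  obtain ⟨w, hw, hKLw⟩ : ∃ w : ℝ, 0 < w ∧ 0 < KL w := by
    refine ⟨|L * x₀|, by positivity, ?_⟩
    have h1 : KL |L * x₀| = KL (L * x₀) := by
      rcases abs_choice (L * x₀) with h | h
      · rw [h]
      · rw [h, hKLeven]
    rw [h1, hKL]
    have h2 : L * x₀ / L = x₀ := by field_simp
    rw [h2]
    positivity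
  -- ## strict monotonicity
  have hmono : StrictMonoOn (fun a => φ a / a) (Ioi (0 : ℝ)) := by
    have dpos : ∀ a b : ℝ, 0 < a → a < b → ∀ z : ℝ, z ≠ 0 →
        (Real.cosh (a*z) - 1)/a < (Real.cosh (b*z) - 1)/b := by
      intro a b ha hab z hz
      have hb : 0 < b := ha.trans hab
      have hza : (0:ℝ) < |z| := abs_pos.mpr hz
      have key : ∀ c : ℝ, 0 < c → (Real.cosh (c*z) - 1)/c
          = |z| * ((Real.cosh (c*|z|) - 1) / (c*|z|)) := by
        intro c hc
        rw [← Real.cosh_abs (c*z), abs_mul, abs_of_pos hc]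
        field_simp
      rw [key a ha, key b hb]
      have := aux_G_strictMono (mem_Ioi.mpr (mul_pos ha hza)) (mem_Ioi.mpr (mul_pos hb hza))
        (mul_lt_mul_of_pos_right hab hza)
      exact mul_lt_mul_of_pos_left this hza
    have dnn : ∀ a b : ℝ, 0 < a → a < b → ∀ z : ℝ,
        0 ≤ (Real.cosh (b*z) - 1)/b - (Real.cosh (a*z) - 1)/a := by
      intro a b ha hab z
      by_cases hz : z = 0
      · simp [hz]
      · linarith [dpos a b ha hab z hz]
    intro a ha b hb hab
    rw [mem_Ioi] at ha hb
    have hrep : ∀ c : ℝ, 0 < c → φ c / c = ∫ z, KL z * ((Real.cosh (c*z) - 1)/c) := by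
      intro c hc
      rw [hφc, ← integral_div]
      congr 1; funext z; ring
    show φ a / a < φ b / b
    rw [hrep a ha, hrep b hb]
    have ia : Integrable (fun z => KL z * ((Real.cosh (a*z) - 1)/a)) := hint _ (by fun_prop)
    have ib : Integrable (fun z => KL z * ((Real.cosh (b*z) - 1)/b)) := hint _ (by fun_prop)
    rw [← sub_pos, ← integral_sub ib ia]
    have heq : (fun z => KL z * ((Real.cosh (b*z) - 1)/b) - KL z * ((Real.cosh (a*z) - 1)/a))
        = fun z => KL z * (((Real.cosh (b*z) - 1)/b) - ((Real.cosh (a*z) - 1)/a)) := by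
      funext z; ring
    rw [heq]
    apply Continuous.integral_pos_of_hasCompactSupport_nonneg_nonzero (x := w)
    · fun_prop
    · exact hKLcs.mul_right
    · intro z
      exact mul_nonneg (hKLnn z) (dnn a b ha hab z)
    · exact ne_of_gt (mul_pos hKLw (by linarith [dpos a b ha hab w (ne_of_gt hw)]))
  -- ## limit at 0⁺
  have h0 : Tendsto (fun a => φ a / a) (nhdsWithin 0 (Ioi (0 : ℝ))) (nhds 0) := by
    have hφnn : ∀ a : ℝ, 0 ≤ φ a := by
      intro a
      rw [hφc]
      exact integral_nonneg fun z =>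
        mul_nonneg (hKLnn z) (by linarith [Real.one_le_cosh (a*z)])
    have hub : ∀ a : ℝ, 0 < a → φ a / a ≤ a * L^2 * Real.exp (a*L) := by
      intro a ha
      have hup : φ a ≤ a^2 * L^2 * Real.exp (a*L) := by
        rw [hφc]
        calc ∫ z, KL z * (Real.cosh (a*z) - 1)
            ≤ ∫ z, KL z * (a^2 * L^2 * Real.exp (a*L)) := by
              apply integral_mono (hint _ (by fun_prop)) (hKLint.mul_const _)
              intro z
              by_cases hz : KL z = 0
              · simp [hz]
              · have hzL : |z| ≤ L := hKLbd z hz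
                apply mul_le_mul_of_nonneg_left _ (hKLnn z)
                calc Real.cosh (a*z) - 1 ≤ (a*z)^2 * Real.exp |a*z| := aux_key_bound
                  _ ≤ a^2 * L^2 * Real.exp (a*L) := by
                      have h1 : (a*z)^2 ≤ a^2 * L^2 := by
                        rw [mul_pow]
                        apply mul_le_mul_of_nonneg_left _ (sq_nonneg a)
                        rw [← sq_abs]
                        exact pow_le_pow_left₀ (abs_nonneg z) hzL 2
                      have h2 : Real.exp |a*z| ≤ Real.exp (a*L) := by
                        apply Real.exp_le_exp.mpr
                        rw [abs_mul, abs_of_pos ha]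
                        exact mul_le_mul_of_nonneg_left hzL ha.le
                      exact mul_le_mul h1 h2 (Real.exp_pos _).le (by positivity)
          _ = a^2 * L^2 * Real.exp (a*L) := by
              rw [integral_mul_const, hKLmass, one_mul]
      rw [div_le_iff₀ ha]
      calc φ a ≤ a^2 * L^2 * Real.exp (a*L) := hup
        _ = a * L^2 * Real.exp (a*L) * a := by ring
    have htu : Tendsto (fun a : ℝ => a * L^2 * Real.exp (a*L))
        (nhdsWithin 0 (Ioi (0:ℝ))) (nhds 0) := by
      have hc : Continuous fun a : ℝ => a * L^2 * Real.exp (a*L) := by fun_prop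
      exact (hc.tendsto' 0 0 (by norm_num)).mono_left nhdsWithin_le_nhds
    apply tendsto_of_tendsto_of_tendsto_of_le_of_le' tendsto_const_nhds htu
    · filter_upwards [self_mem_nhdsWithin] with a (ha : a ∈ Ioi (0:ℝ))
      exact div_nonneg (hφnn a) (le_of_lt ha)
    · filter_upwards [self_mem_nhdsWithin] with a (ha : a ∈ Ioi (0:ℝ))
      exact hub a ha
  -- ## limit at +∞
  have htop : Tendsto (fun a => φ a / a) atTop atTop := by
    obtain ⟨ε, hε, hball⟩ : ∃ ε > 0, ∀ z, |z - w| < ε → KL w / 2 ≤ KL z := by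
      have hev : ∀ᶠ z in nhds w, KL w / 2 < KL z :=
        (hKLc.tendsto w).eventually (eventually_gt_nhds (by linarith))
      rw [Metric.eventually_nhds_iff] at hev
      obtain ⟨ε, hε, h⟩ := hev
      exact ⟨ε, hε, fun z hz => (h (by simpa [Real.dist_eq] using hz)).le⟩
    set δ : ℝ := min (ε/2) (w/2) with hδdef
    have hδpos : 0 < δ := lt_min (by linarith) (by linarith)
    have hδε : δ < ε := (min_le_left _ _).trans_lt (by linarith)
    have hδw : δ ≤ w/2 := min_le_right _ _
    set ρ : ℝ := w - δ with hρdef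
    have hρpos : 0 < ρ := by simp only [hρdef]; linarith
    set c : ℝ := KL w / 2 with hcdef
    have hcpos : 0 < c := by positivity
    have hlb : ∀ a : ℝ, 0 < a → c * (2*δ) * (Real.cosh (a*ρ) - 1) ≤ φ a := by
      intro a ha
      have hnn : ∀ z, 0 ≤ KL z * (Real.cosh (a*z) - 1) := fun z =>
        mul_nonneg (hKLnn z) (by linarith [Real.one_le_cosh (a*z)])
      have hintg : Integrable (fun z => KL z * (Real.cosh (a*z) - 1)) := hint _ (by fun_prop)
      rw [hφc]
      calc c * (2*δ) * (Real.cosh (a*ρ) - 1)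
          = (c * (Real.cosh (a*ρ) - 1)) * (volume (Icc (w-δ) (w+δ))).toReal := by
            rw [Real.volume_Icc]
            rw [ENNReal.toReal_ofReal (by linarith)]
            ring_nf
        _ ≤ ∫ z in Icc (w-δ) (w+δ), KL z * (Real.cosh (a*z) - 1) := by
            apply setIntegral_ge_of_const_le_real measurableSet_Icc
              (by rw [Real.volume_Icc]; exact ENNReal.ofReal_ne_top)
            · intro z hz
              obtain ⟨hz1, hz2⟩ := hz
              have h1 : c ≤ KL z := hball z (abs_lt.mpr ⟨by linarith, by linarith⟩)
              have h2 : Real.cosh (a*ρ) - 1 ≤ Real.cosh (a*z) - 1 := by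
                have habs : |a*ρ| ≤ |a*z| := by
                  rw [abs_mul, abs_mul, abs_of_pos ha, abs_of_pos hρpos,
                    abs_of_pos (by linarith : (0:ℝ) < z)]
                  apply mul_le_mul_of_nonneg_left (by linarith) ha.le
                linarith [Real.cosh_le_cosh.mpr habs]
              exact mul_le_mul h1 h2 (by linarith [Real.one_le_cosh (a*ρ)]) (hKLnn z)
            · exact hintg.integrableOn
        _ ≤ ∫ z, KL z * (Real.cosh (a*z) - 1) :=
            setIntegral_le_integral hintg (Eventually.of_forall hnn)
    have hmin : Tendsto (fun a : ℝ => c * (2*δ) * (Real.cosh (a*ρ) - 1) / a) atTop atTop := by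
      have h1 : Tendsto (fun a : ℝ => a * ρ) atTop atTop :=
        Tendsto.atTop_mul_const hρpos tendsto_id
      have h2 : Tendsto (fun a : ℝ => Real.exp (a*ρ) / (a*ρ)) atTop atTop :=
        ((tendsto_exp_div_pow_atTop 1).comp h1).congr (by intro x; simp)
      have h3 : Tendsto (fun a : ℝ => c * δ * ρ * (Real.exp (a*ρ) / (a*ρ)) - c * (2*δ) * 2)
          atTop atTop :=
        tendsto_atTop_add_const_right _ _ (h2.const_mul_atTop (by positivity))
      apply tendsto_atTop_mono' _ _ h3
      filter_upwards [eventually_ge_atTop (1:ℝ)] with a ha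
      have ha0 : (0:ℝ) < a := by linarith
      have hcosh : Real.exp (a*ρ) / 2 - 1 ≤ Real.cosh (a*ρ) - 1 := by
        rw [Real.cosh_eq]
        have := (Real.exp_pos (-(a*ρ))).le
        linarith
      have hR : c * (2*δ) * (Real.exp (a*ρ)/2 - 1) / a
          ≤ c * (2*δ) * (Real.cosh (a*ρ) - 1) / a := by
        gcongr
      have hsplit : c*(2*δ)*(Real.exp (a*ρ)/2 - 1)/a
          = c*δ*ρ*(Real.exp (a*ρ)/(a*ρ)) - c*(2*δ)/a := by
        field_simp
      have hda : c*(2*δ)/a ≤ c*(2*δ)*2 := by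
        have h5 : c*(2*δ)/a ≤ c*(2*δ) := div_le_self (by positivity) ha
        nlinarith
      linarith
    apply tendsto_atTop_mono' _ _ hmin
    filter_upwards [eventually_gt_atTop (0:ℝ)] with a ha
    show c * (2*δ) * (Real.cosh (a*ρ) - 1) / a ≤ φ a / a
    gcongr
    exact hlb a ha
  -- ## continuity of φ
  have hφcont : Continuous φ := by
    rw [continuous_iff_continuousAt]
    intro a₀
    have h : ContinuousAt (fun a => ∫ z, KL z * (Real.exp (a * z) - 1)) a₀ := by
      apply continuousAt_of_dominated (bound := fun z => KL z * (Real.exp ((|a₀|+1)*L) + 1))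
      · filter_upwards with a
        exact (Continuous.aestronglyMeasurable (by fun_prop))
      · filter_upwards [Ioo_mem_nhds (by linarith : a₀ - 1 < a₀) (by linarith : a₀ < a₀ + 1)]
          with a ha
        filter_upwards with z
        by_cases hz : KL z = 0
        · simp [hz, norm_mul, hz]
        · have hzL : |z| ≤ L := hKLbd z hz
          have haa : |a| ≤ |a₀| + 1 := by
            obtain ⟨h1, h2⟩ := ha
            rw [abs_le]
            constructor <;> cases abs_cases a₀ <;> linarith [neg_abs_le a₀, le_abs_self a₀]
          rw [norm_mul, Real.norm_eq_abs, Real.norm_eq_abs, abs_of_nonneg (hKLnn z)]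
          apply mul_le_mul_of_nonneg_left _ (hKLnn z)
          have h1 : Real.exp (a*z) ≤ Real.exp ((|a₀|+1)*L) := by
            apply Real.exp_le_exp.mpr
            calc a*z ≤ |a*z| := le_abs_self _
              _ = |a| * |z| := abs_mul a z
              _ ≤ (|a₀|+1)*L := mul_le_mul haa hzL (abs_nonneg z) (by positivity)
          calc |Real.exp (a*z) - 1| ≤ |Real.exp (a*z)| + |(1:ℝ)| := abs_sub _ _
            _ = Real.exp (a*z) + 1 := by rw [abs_of_pos (Real.exp_pos _)]; norm_num
            _ ≤ Real.exp ((|a₀|+1)*L) + 1 := by linarith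
      · exact hKLint.mul_const _
      · filter_upwards with z
        exact (Continuous.continuousAt (by fun_prop))
    have heq : φ = fun a => ∫ z, KL z * (Real.exp (a * z) - 1) := funext hφ
    rw [heq]
    exact h
  -- ## conclusion
  refine ⟨hmono, h0, htop, ?_⟩
  intro c hc D hD
  have hcD : 0 < c / D := div_pos hc hD
  obtain ⟨a₁, ha₁lt, ha₁pos⟩ :
      ∃ a₁ : ℝ, φ a₁ / a₁ < c / D ∧ a₁ ∈ Ioi (0:ℝ) :=
    ((h0.eventually (eventually_lt_nhds hcD)).and self_mem_nhdsWithin).exists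
  rw [mem_Ioi] at ha₁pos
  obtain ⟨a₂, h2ge, h12⟩ :
      ∃ a₂ : ℝ, c / D ≤ φ a₂ / a₂ ∧ a₁ < a₂ :=
    ((htop.eventually_ge_atTop (c/D)).and (eventually_gt_atTop a₁)).exists
  have hψcont : ContinuousOn (fun a => φ a / a) (Icc a₁ a₂) := by
    apply (hφcont.continuousOn).div continuousOn_id
    intro x hx
    exact ne_of_gt (lt_of_lt_of_le ha₁pos hx.1)
  obtain ⟨a, haIcc, haeq⟩ := intermediate_value_Icc h12.le hψcont ⟨ha₁lt.le, h2ge⟩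
  have hapos : 0 < a := lt_of_lt_of_le ha₁pos haIcc.1
  have hkey : ∀ x : ℝ, 0 < x → (D * φ x = c * x ↔ φ x / x = c / D) := by
    intro x hx
    rw [div_eq_div_iff (ne_of_gt hx) (ne_of_gt hD)]
    constructor <;> intro h <;> linarith
  refine ⟨a, ⟨hapos, (hkey a hapos).mpr haeq⟩, ?_⟩
  rintro a' ⟨ha'pos, ha'eq⟩
  exact hmono.injOn (mem_Ioi.mpr ha'pos) (mem_Ioi.mpr hapos)
    (((hkey a' ha'pos).mp ha'eq).trans haeq.symm)
end

section
/- Fix r > 0 and L > 0, and for D > 0 set c_L(D) := min_{a>0} (D·φ_L(a) + r)/a. Then c_L(D)/√D → √(2r·L²⟨x²K⟩) as D → +∞; in other words, the minimal plane-wave speed for the nonlocal Fisher-KPP linearisation grows like √(2Dr·L²⟨x²K⟩) for large D. -/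
open MeasureTheory Real Set Filter

private lemma aux_sq_le_sinh_sq (y : ℝ) : y ^ 2 ≤ Real.sinh y ^ 2 := by
  rcases le_total 0 y with h | h
  · exact pow_le_pow_left₀ h (Real.self_le_sinh_iff.mpr h) 2
  · have h' : 0 ≤ -y := neg_nonneg.2 h
    have := pow_le_pow_left₀ h' (Real.self_le_sinh_iff.mpr h') 2
    simpa [Real.sinh_neg, neg_pow] using this

private lemma aux_cosh_lower (x : ℝ) : x ^ 2 / 2 ≤ Real.cosh x - 1 := by
  have h1 : Real.cosh x = 1 + 2 * Real.sinh (x / 2) ^ 2 := by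
    have h := Real.cosh_two_mul (x / 2)
    have h2 : (2 : ℝ) * (x / 2) = x := by ring
    rw [h2] at h
    rw [h, Real.cosh_sq]; ring
  have h3 := aux_sq_le_sinh_sq (x / 2)
  rw [h1]
  nlinarith

private lemma aux_cosh_upper {x : ℝ} (hx : |x| ≤ 1) :
    Real.cosh x - 1 ≤ x ^ 2 / 2 + |x| ^ 3 := by
  have h1 := Real.exp_bound hx (by norm_num : 0 < 3)
  have h2 := Real.exp_bound (x := -x) (by rwa [abs_neg]) (by norm_num : 0 < 3)
  simp only [Finset.sum_range_succ, Finset.sum_range_zero, Nat.factorial] at h1 h2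
  norm_num at h1 h2
  have e1 := (abs_le.1 h1).2
  have e2 := (abs_le.1 h2).2
  rw [Real.cosh_eq]
  have h3 : (0:ℝ) ≤ |x| ^ 3 := by positivity
  nlinarith [e1, e2]

/-- for fixed `r, L > 0`, the minimal plane-wave speed
`c_L(D) = min_{a>0} (D * φ_L a + r) / a` satisfies
`c_L(D) / √D → √(2 * r * L^2 * ⟨x²K⟩)` as `D → +∞`. -/
theorem minimal_speed_asymptotics_large_D
    (K : ℝ → ℝ) (hK_even : ∀ x, K (-x) = K x) (hK_smooth : ContDiff ℝ (⊤ : ℕ∞) K)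
    (hK_nonneg : ∀ x, 0 ≤ K x) (hK_supp : ∀ x, x ∉ Icc (-1 : ℝ) 1 → K x = 0)
    (hK_mass : ∫ x, K x = 1)
    (L : ℝ) (hL : 0 < L)
    (KL : ℝ → ℝ) (hKL : ∀ x, KL x = (1 / L) * K (x / L))
    (φ : ℝ → ℝ) (hφ : ∀ a, φ a = ∫ z, KL z * (Real.exp (a * z) - 1))
    (r : ℝ) (hr : 0 < r)
    (cL : ℝ → ℝ)
    (hcL : ∀ D : ℝ, 0 < D →
      IsLeast ((fun a => (D * φ a + r) / a) '' Ioi (0 : ℝ)) (cL D)) :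
    Tendsto (fun D => cL D / Real.sqrt D) atTop
      (nhds (Real.sqrt (2 * r * L ^ 2 * ∫ z, K z * z ^ 2))) := by
  have hKc : Continuous K := hK_smooth.continuous
  have hKcs : HasCompactSupport K := HasCompactSupport.intro isCompact_Icc hK_supp
  set M : ℝ := ∫ z, K z * z ^ 2 with hMdef
  -- integrability helper
  have hint : ∀ g : ℝ → ℝ, Continuous g → Integrable (fun u => K u * g u) := by
    intro g hg
    exact (hKc.mul hg).integrable_of_hasCompactSupport (hKcs.mul_right)
  -- M > 0
  have hM : 0 < M := by
    have hnn : 0 ≤ M := integral_nonneg (fun u => mul_nonneg (hK_nonneg u) (sq_nonneg u))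
    rcases hnn.lt_or_eq with h | h
    · exact h
    · exfalso
      have hi : Integrable (fun u => K u * u ^ 2) := hint _ (by fun_prop)
      have h0 : (fun u => K u * u ^ 2) =ᵐ[volume] 0 :=
        (integral_eq_zero_iff_of_nonneg
          (fun u => mul_nonneg (hK_nonneg u) (sq_nonneg u)) hi).1 h.symm
      have hne : ∀ᵐ u : ℝ, u ≠ 0 := by
        simp only [ae_iff, not_not]
        have he : {u : ℝ | u = 0} = {(0 : ℝ)} := by ext; simp
        rw [he]; exact measure_singleton 0
      have hK0 : K =ᵐ[volume] 0 := by
        filter_upwards [h0, hne] with u hu hu0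
        have : u ^ 2 ≠ 0 := pow_ne_zero _ hu0
        simpa [this] using hu
      have : (∫ x, K x) = 0 := by
        rw [integral_congr_ae hK0]; simp
      rw [hK_mass] at this; norm_num at this
  clear_value M
  -- φ in terms of K
  have hφ2 : ∀ a, φ a = ∫ u, K u * (Real.exp (a * L * u) - 1) := by
    intro a
    rw [hφ]
    have h1 : (fun z => KL z * (Real.exp (a * z) - 1)) =
        fun z => (1 / L) * ((fun u => K u * (Real.exp (a * L * u) - 1)) (z / L)) := by
      funext z
      have hz : a * L * (z / L) = a * z := by field_simp
      simp only [hKL, hz]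
      ring
    rw [h1, integral_const_mul,
      MeasureTheory.Measure.integral_comp_div (fun u => K u * (Real.exp (a * L * u) - 1)) L,
      smul_eq_mul, abs_of_pos hL]
    field_simp
  -- φ in cosh form
  have hφ3 : ∀ a, φ a = ∫ u, K u * (Real.cosh (a * L * u) - 1) := by
    intro a
    have hint1 : Integrable (fun u => K u * (Real.exp (a * L * u) - 1)) :=
      hint _ (by fun_prop)
    have hint2 : Integrable (fun u => K u * (Real.exp (-(a * L * u)) - 1)) :=
      hint _ (by fun_prop)
    have h2 : φ a = ∫ u, K u * (Real.exp (-(a * L * u)) - 1) := by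
      rw [hφ2]
      have := MeasureTheory.Measure.integral_comp_mul_left
        (fun u => K u * (Real.exp (-(a * L * u)) - 1)) (-1)
      have heq : (fun u : ℝ => (fun v => K v * (Real.exp (-(a * L * v)) - 1)) ((-1) * u)) =
          fun u => K u * (Real.exp (a * L * u) - 1) := by
        funext u
        simp only
        have e1 : -(a * L * (-1 * u)) = a * L * u := by ring
        have e2 : (-1 : ℝ) * u = -u := by ring
        rw [e1, e2, hK_even]
      rw [heq] at this
      rw [this]
      norm_num
    have hsum : (∫ u, (K u * (Real.exp (a * L * u) - 1) +
        K u * (Real.exp (-(a * L * u)) - 1))) = 2 * φ a := by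
      rw [integral_add hint1 hint2, ← hφ2, ← h2]; ring
    have hpt : (fun u => (K u * (Real.exp (a * L * u) - 1) +
        K u * (Real.exp (-(a * L * u)) - 1))) =
        fun u => 2 * (K u * (Real.cosh (a * L * u) - 1)) := by
      funext u
      rw [Real.cosh_eq]; ring
    rw [hpt, integral_const_mul] at hsum
    linarith
  -- lower bound for φ
  have hφ_lb : ∀ a : ℝ, L ^ 2 * M / 2 * a ^ 2 ≤ φ a := by
    intro a
    rw [hφ3]
    have hmono : (∫ u, K u * ((a * L * u) ^ 2 / 2)) ≤
        ∫ u, K u * (Real.cosh (a * L * u) - 1) := by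
      refine integral_mono (hint _ (by fun_prop)) (hint _ (by fun_prop)) fun u => ?_
      exact mul_le_mul_of_nonneg_left (aux_cosh_lower _) (hK_nonneg u)
    have hcalc : (∫ u, K u * ((a * L * u) ^ 2 / 2)) = L ^ 2 * M / 2 * a ^ 2 := by
      have : (fun u => K u * ((a * L * u) ^ 2 / 2)) =
          fun u => (a ^ 2 * L ^ 2 / 2) * (K u * u ^ 2) := by
        funext u; ring
      rw [this, integral_const_mul, ← hMdef]; ring
    linarith
  -- upper bound for φ
  have hφ_ub : ∀ a : ℝ, 0 ≤ a → a * L ≤ 1 →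
      φ a ≤ (a ^ 2 * L ^ 2 / 2 + a ^ 3 * L ^ 3) * M := by
    intro a ha haL
    rw [hφ3]
    have hmono : (∫ u, K u * (Real.cosh (a * L * u) - 1)) ≤
        ∫ u, K u * ((a ^ 2 * L ^ 2 / 2 + a ^ 3 * L ^ 3) * u ^ 2) := by
      refine integral_mono (hint _ (by fun_prop)) (hint _ (by fun_prop)) fun u => ?_
      by_cases hu : u ∈ Icc (-1 : ℝ) 1
      · have hu1 : |u| ≤ 1 := abs_le.mpr ⟨hu.1, hu.2⟩
        have haL0 : 0 ≤ a * L := mul_nonneg ha hL.le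
        have hxabs : |a * L * u| = a * L * |u| := by
          rw [abs_mul, abs_of_nonneg haL0]
        have hx1 : |a * L * u| ≤ 1 := by
          rw [hxabs]
          calc a * L * |u| ≤ a * L * 1 := by
                exact mul_le_mul_of_nonneg_left hu1 haL0
            _ ≤ 1 := by linarith
        have hc := aux_cosh_upper hx1
        have key : Real.cosh (a * L * u) - 1 ≤
            (a ^ 2 * L ^ 2 / 2 + a ^ 3 * L ^ 3) * u ^ 2 := by
          have h3 : |a * L * u| ^ 3 = (a * L) ^ 3 * |u| ^ 3 := by
            rw [hxabs]; ring
          have hu3 : |u| ^ 3 ≤ u ^ 2 := by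
            have := sq_abs u
            nlinarith [abs_nonneg u]
          have hmul : (a * L) ^ 3 * |u| ^ 3 ≤ (a * L) ^ 3 * u ^ 2 :=
            mul_le_mul_of_nonneg_left hu3 (by positivity)
          have hsq : (a * L * u) ^ 2 = a ^ 2 * L ^ 2 * u ^ 2 := by ring
          nlinarith [hc]
        exact mul_le_mul_of_nonneg_left key (hK_nonneg u)
      · rw [hK_supp u hu]; simp
    have hcalc : (∫ u, K u * ((a ^ 2 * L ^ 2 / 2 + a ^ 3 * L ^ 3) * u ^ 2)) =
        (a ^ 2 * L ^ 2 / 2 + a ^ 3 * L ^ 3) * M := by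
      have : (fun u => K u * ((a ^ 2 * L ^ 2 / 2 + a ^ 3 * L ^ 3) * u ^ 2)) =
          fun u => (a ^ 2 * L ^ 2 / 2 + a ^ 3 * L ^ 3) * (K u * u ^ 2) := by
        funext u; ring
      rw [this, integral_const_mul, ← hMdef]
    linarith
  -- key constants
  set s : ℝ := Real.sqrt (2 * r * L ^ 2 * M) with hsdef
  set b : ℝ := Real.sqrt (2 * r / (L ^ 2 * M)) with hbdef
  have hs_pos : 0 < s := Real.sqrt_pos.2 (by positivity)
  have hb_pos : 0 < b := Real.sqrt_pos.2 (by positivity)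
  have hs2 : s ^ 2 = 2 * r * L ^ 2 * M := Real.sq_sqrt (by positivity)
  have hb2 : b ^ 2 = 2 * r / (L ^ 2 * M) := Real.sq_sqrt (by positivity)
  have hb2' : b ^ 2 * (L ^ 2 * M) = 2 * r := by
    rw [hb2]; field_simp
  have hsb0 : s * b = 2 * r := by
    have h1 : (s * b) ^ 2 = (2 * r) ^ 2 := by
      rw [mul_pow, hs2, hb2]; field_simp
    have h2 : 0 ≤ s * b := by positivity
    nlinarith
  have hsb : s * b = 2 * r := hsb0
  clear_value s b
  -- lower bound for cL D / √D
  have hlow : ∀ᶠ D in atTop, s ≤ cL D / Real.sqrt D := by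
    filter_upwards [eventually_gt_atTop (0 : ℝ)] with D hD
    have hsD : 0 < Real.sqrt D := Real.sqrt_pos.2 hD
    obtain ⟨hmem, hlb⟩ := hcL D hD
    obtain ⟨a, ha, hEq⟩ := hmem
    have ha0 : 0 < a := ha
    rw [le_div_iff₀ hsD]
    rw [← hEq]
    rw [le_div_iff₀ ha0]
    have hDφ : D * (L ^ 2 * M / 2 * a ^ 2) ≤ D * φ a :=
      mul_le_mul_of_nonneg_left (hφ_lb a) hD.le
    have hD2 : Real.sqrt D ^ 2 = D := Real.sq_sqrt hD.le
    -- want: s * √D * a ≤ D * φ a + r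
    have hAM : s * Real.sqrt D * a ≤ D * (L ^ 2 * M / 2 * a ^ 2) + r := by
      have hLM : 0 < L ^ 2 * M := by positivity
      have hc2 : (s * Real.sqrt D) ^ 2 = 2 * D * r * (L ^ 2 * M) := by
        rw [mul_pow, hs2, hD2]; ring
      nlinarith [sq_nonneg (D * (L ^ 2 * M) * a - s * Real.sqrt D), hc2,
        mul_pos hD hLM]
    linarith
  -- upper bound for cL D / √D
  have hup : ∀ᶠ D in atTop,
      cL D / Real.sqrt D ≤ (2 * r + L ^ 3 * M * b ^ 3 / Real.sqrt D) / b := by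
    filter_upwards [eventually_gt_atTop (max 1 ((b * L) ^ 2))] with D hD
    have hD1 : (1 : ℝ) < D := lt_of_le_of_lt (le_max_left _ _) hD
    have hD0 : 0 < D := lt_trans one_pos hD1
    have hsD : 0 < Real.sqrt D := Real.sqrt_pos.2 hD0
    have hD2 : Real.sqrt D ^ 2 = D := Real.sq_sqrt hD0.le
    set a : ℝ := b / Real.sqrt D with hadef
    clear_value a
    have ha0 : 0 < a := by rw [hadef]; exact div_pos hb_pos hsD
    have haL : a * L ≤ 1 := by
      have hbl : (b * L) ^ 2 < D := lt_of_le_of_lt (le_max_right _ _) hD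
      have hbl' : b * L ≤ Real.sqrt D := by
        have := Real.sqrt_le_sqrt hbl.le
        rwa [Real.sqrt_sq (by positivity)] at this
      rw [hadef, div_mul_eq_mul_div, div_le_one hsD]
      linarith
    have hle : cL D ≤ (D * φ a + r) / a := (hcL D hD0).2 ⟨a, ha0, rfl⟩
    have haD : a * Real.sqrt D = b := by
      rw [hadef]; exact div_mul_cancel₀ b hsD.ne'
    have hφu := hφ_ub a ha0.le haL
    have hDa2 : D * a ^ 2 = b ^ 2 := by
      rw [hadef, div_pow, hD2]
      field_simp
    have hDa3 : D * a ^ 3 = b ^ 3 / Real.sqrt D := by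
      rw [hadef, div_pow,
        show Real.sqrt D ^ 3 = Real.sqrt D ^ 2 * Real.sqrt D by ring, hD2]
      field_simp [hD0.ne', hsD.ne']
    have hDφ : D * φ a ≤ r + L ^ 3 * M * b ^ 3 / Real.sqrt D := by
      have h1 : D * φ a ≤ D * ((a ^ 2 * L ^ 2 / 2 + a ^ 3 * L ^ 3) * M) :=
        mul_le_mul_of_nonneg_left hφu hD0.le
      have h2 : D * ((a ^ 2 * L ^ 2 / 2 + a ^ 3 * L ^ 3) * M) =
          (D * a ^ 2) * L ^ 2 * M / 2 + (D * a ^ 3) * L ^ 3 * M := by ring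
      rw [h2, hDa2, hDa3] at h1
      have h3 : b ^ 2 * L ^ 2 * M / 2 = r := by linarith [hb2']
      have h4 : b ^ 3 / Real.sqrt D * L ^ 3 * M = L ^ 3 * M * b ^ 3 / Real.sqrt D := by
        ring
      rw [h3, h4] at h1
      exact h1
    calc cL D / Real.sqrt D ≤ ((D * φ a + r) / a) / Real.sqrt D := by
          gcongr
      _ = (D * φ a + r) / b := by
          rw [div_div, haD]
      _ ≤ (2 * r + L ^ 3 * M * b ^ 3 / Real.sqrt D) / b := by
          have h5 : D * φ a + r ≤ 2 * r + L ^ 3 * M * b ^ 3 / Real.sqrt D := by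
            linarith
          exact (div_le_div_iff_of_pos_right hb_pos).2 h5
  -- the upper bound tends to s
  have hU : Tendsto (fun D => (2 * r + L ^ 3 * M * b ^ 3 / Real.sqrt D) / b) atTop
      (nhds s) := by
    have hsqrt : Tendsto Real.sqrt atTop atTop := by
      rw [tendsto_atTop_atTop]
      intro c
      exact ⟨c ^ 2, fun x hx => by
        calc c ≤ |c| := le_abs_self c
          _ = Real.sqrt (c ^ 2) := (Real.sqrt_sq_eq_abs c).symm
          _ ≤ Real.sqrt x := Real.sqrt_le_sqrt hx⟩
    have h0 : Tendsto (fun D => L ^ 3 * M * b ^ 3 / Real.sqrt D) atTop (nhds 0) :=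
      Tendsto.div_atTop tendsto_const_nhds hsqrt
    have := ((tendsto_const_nhds (x := (2 * r : ℝ)) (f := atTop)).add h0).div_const b
    have heq : (2 * r + 0) / b = s := by
      rw [add_zero, div_eq_iff hb_pos.ne', mul_comm, hsb]; ring
    rwa [heq] at this
  exact tendsto_of_tendsto_of_tendsto_of_le_of_le' tendsto_const_nhds hU hlow hup
end

section
/- (Lemma 4.1, case 1, algebraic form.) Let d, D, μ, ν > 0 and r > 0, set c_K := 2√(dr) and D_* := 2r/φ_L(√(r/d)), and assume D ≤ D_*. Then for c > 0 the system of inequalities { −D·φ_L(a) + c·a + dμb/(ν + db) ≥ 0 , c·a − d(a² + b²) ≥ r } admits a solution (a,b) with a > 0 and b > −ν/d if and only if c ≥ c_K. (Such solutions correspond exactly to plane-wave supersolutions (u,v) = e^{−a(x−ct)}(1, γe^{−by}) with γ = μ/(ν+db) of the road-field system linearised at 0.) -/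
open MeasureTheory Real Set

/-- Lemma 4.1, case 1, algebraic form: if `D ≤ D_*`, then the system
`{ -D*φ_L a + c*a + d*μ*b/(ν + d*b) ≥ 0 , c*a - d*(a² + b²) ≥ r }` has a solution with
`a > 0`, `b > -ν/d` if and only if `c ≥ c_K = 2√(dr)`. -/
theorem plane_wave_supersolutions_subcritical
    (K : ℝ → ℝ) (hK_even : ∀ x, K (-x) = K x) (hK_smooth : ContDiff ℝ (⊤ : ℕ∞) K)
    (hK_nonneg : ∀ x, 0 ≤ K x) (hK_supp : ∀ x, x ∉ Icc (-1 : ℝ) 1 → K x = 0)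
    (hK_mass : ∫ x, K x = 1)
    (L : ℝ) (hL : 0 < L)
    (KL : ℝ → ℝ) (hKL : ∀ x, KL x = (1 / L) * K (x / L))
    (φ : ℝ → ℝ) (hφ : ∀ a, φ a = ∫ z, KL z * (Real.exp (a * z) - 1))
    (d D μ ν r : ℝ) (hd : 0 < d) (hD : 0 < D) (hμ : 0 < μ) (hν : 0 < ν) (hr : 0 < r)
    (cK Dstar : ℝ)
    (hcK : cK = 2 * Real.sqrt (d * r))
    (hDstar : Dstar = 2 * r / φ (Real.sqrt (r / d)))
    (hDle : D ≤ Dstar) :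
    ∀ c : ℝ, 0 < c →
      ((∃ a b : ℝ, 0 < a ∧ -(ν / d) < b
          ∧ 0 ≤ -D * φ a + c * a + d * μ * b / (ν + d * b)
          ∧ r ≤ c * a - d * (a ^ 2 + b ^ 2))
        ↔ cK ≤ c) := by
  intro c hc
  set s := Real.sqrt (d * r) with hs
  have hs0 : 0 ≤ s := Real.sqrt_nonneg _
  have hs2 : s ^ 2 = d * r := Real.sq_sqrt (by positivity)
  constructor
  · rintro ⟨a, b, ha, hb, h1, h2⟩
    rw [hcK]
    have hb2 : 0 ≤ b ^ 2 := sq_nonneg b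
    have key : 2 * s * a ≤ d * a ^ 2 + r := by
      nlinarith [sq_nonneg (d * a - s), hd]
    have : (c - 2 * s) * a ≥ 0 := by nlinarith
    by_contra h
    push_neg at h
    nlinarith [mul_pos (sub_pos.mpr h) ha]
  · intro hcc
    rw [hcK] at hcc
    set a := Real.sqrt (r / d) with ha
    have ha0 : 0 < a := Real.sqrt_pos.mpr (by positivity)
    have ha2 : a ^ 2 = r / d := Real.sq_sqrt (by positivity)
    have hsa : s * a = r := by
      rw [hs, ha, ← Real.sqrt_mul (by positivity)]
      rw [show d * r * (r / d) = r ^ 2 by field_simp]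
      exact Real.sqrt_sq hr.le
    have hca : 2 * r ≤ c * a := by nlinarith [mul_le_mul_of_nonneg_right hcc ha0.le]
    refine ⟨a, 0, ha0, neg_lt_zero.mpr (by positivity), ?_, ?_⟩
    · have hz : d * μ * 0 / (ν + d * 0) = 0 := by simp
      rw [hz]
      rcases le_or_gt (φ a) 0 with hφa | hφa
      · have : 0 ≤ -D * φ a := by nlinarith
        nlinarith [mul_pos hc ha0]
      · have hDφ : D * φ a ≤ 2 * r := by
          rw [hDstar] at hDle
          have := (le_div_iff₀ hφa).mp hDle
          linarith
        linarith
    · have : d * (a ^ 2 + 0 ^ 2) = r := by rw [ha2]; field_simp; simp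
      rw [this]; linarith
end

section
/- (Lemma 4.1, case 2, algebraic form.) Let d, D, μ, ν > 0 and r > 0, set c_K := 2√(dr) and D_* := 2r/φ_L(√(r/d)), and assume D > D_*. Then there exists c_*(D,L) > c_K such that for c > 0 the system of inequalities { −D·φ_L(a) + c·a + dμb/(ν + db) ≥ 0 , c·a − d(a² + b²) ≥ r } admits a solution (a,b) with a > 0 and b > −ν/d if and only if c ≥ c_*(D,L). -/
open MeasureTheory Real Set Filter Topology

lemma my_integrable_of_supp {L : ℝ} {h : ℝ → ℝ} (hc : Continuous h)
    (h0 : ∀ x, x ∉ Icc (-L) L → h x = 0) : Integrable h :=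
  hc.integrable_of_hasCompactSupport (HasCompactSupport.intro isCompact_Icc h0)

lemma my_phi_continuous {L : ℝ} (hL : 0 < L) {KL : ℝ → ℝ}
    (hc : Continuous KL) (hnn : ∀ x, 0 ≤ KL x)
    (h0 : ∀ x, x ∉ Icc (-L) L → KL x = 0) :
    Continuous (fun a => ∫ z, KL z * (Real.exp (a * z) - 1)) := by
  rw [continuous_iff_continuousAt]
  intro a0
  apply continuousAt_of_dominated
    (bound := fun z => KL z * (Real.exp ((|a0| + 1) * L) + 1))
  · filter_upwards with a
    exact (hc.mul (by continuity)).aestronglyMeasurable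
  · filter_upwards [Metric.ball_mem_nhds a0 one_pos] with a ha
    filter_upwards with z
    by_cases hz : z ∈ Icc (-L) L
    · have hzb : |z| ≤ L := abs_le.mpr ⟨hz.1, hz.2⟩
      have hab : |a| ≤ |a0| + 1 := by
        have h1 : |a - a0| < 1 := by simpa [Real.dist_eq] using ha
        have h2 := abs_sub_abs_le_abs_sub a a0
        linarith
      have haz : a * z ≤ (|a0| + 1) * L := by
        calc a * z ≤ |a * z| := le_abs_self _
          _ = |a| * |z| := abs_mul a z
          _ ≤ (|a0| + 1) * L := by
              apply mul_le_mul hab hzb (abs_nonneg z) (by positivity)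
      have : |Real.exp (a * z) - 1| ≤ Real.exp ((|a0| + 1) * L) + 1 := by
        calc |Real.exp (a * z) - 1| ≤ |Real.exp (a * z)| + 1 := by
              simpa using abs_sub (Real.exp (a*z)) 1
          _ ≤ Real.exp ((|a0| + 1) * L) + 1 := by
              rw [abs_of_pos (Real.exp_pos _)]
              exact add_le_add_left (Real.exp_le_exp.mpr haz) 1
      have hKLz := hnn z
      calc ‖KL z * (Real.exp (a * z) - 1)‖ = KL z * |Real.exp (a * z) - 1| := by
            rw [norm_mul, Real.norm_eq_abs, Real.norm_eq_abs, abs_of_nonneg hKLz]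
        _ ≤ KL z * (Real.exp ((|a0| + 1) * L) + 1) :=
            mul_le_mul_of_nonneg_left this hKLz
    · simp [h0 z hz]
  · exact my_integrable_of_supp (L := L) (hc.mul continuous_const)
      (fun x hx => by simp [h0 x hx])
  · filter_upwards with z
    exact (Continuous.continuousAt (by continuity))

lemma my_cosh_nonneg (u : ℝ) : 0 ≤ Real.exp u + Real.exp (-u) - 2 := by
  have h := sq_nonneg (Real.exp (u/2) - Real.exp (-(u/2)))
  have e1 : Real.exp (u/2) * Real.exp (-(u/2)) = 1 := by
    rw [← Real.exp_add]; simp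
  have e2 : Real.exp (u/2) * Real.exp (u/2) = Real.exp u := by
    rw [← Real.exp_add]; ring_nf
  have e3 : Real.exp (-(u/2)) * Real.exp (-(u/2)) = Real.exp (-u) := by
    rw [← Real.exp_add]; ring_nf
  nlinarith

lemma my_cosh_pos {u : ℝ} (hu : u ≠ 0) : 0 < Real.exp u + Real.exp (-u) - 2 := by
  have h : Real.exp (u/2) ≠ Real.exp (-(u/2)) := by
    intro h; apply hu
    have := Real.exp_eq_exp.mp h
    linarith
  have h2 := sq_pos_of_ne_zero (sub_ne_zero.mpr h)
  have e1 : Real.exp (u/2) * Real.exp (-(u/2)) = 1 := by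
    rw [← Real.exp_add]; simp
  have e2 : Real.exp (u/2) * Real.exp (u/2) = Real.exp u := by
    rw [← Real.exp_add]; ring_nf
  have e3 : Real.exp (-(u/2)) * Real.exp (-(u/2)) = Real.exp (-u) := by
    rw [← Real.exp_add]; ring_nf
  nlinarith

lemma my_phi_pos {L : ℝ} (hL : 0 < L) {KL : ℝ → ℝ}
    (hc : Continuous KL) (hnn : ∀ x, 0 ≤ KL x)
    (h0 : ∀ x, x ∉ Icc (-L) L → KL x = 0)
    (heven : ∀ x, KL (-x) = KL x)
    {z0 : ℝ} (hz0 : z0 ≠ 0) (hKz0 : 0 < KL z0)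
    {a : ℝ} (ha : a ≠ 0) :
    0 < ∫ z, KL z * (Real.exp (a * z) - 1) := by
  set f : ℝ → ℝ := fun z => KL z * (Real.exp (a * z) - 1) with hf
  set F : ℝ → ℝ := fun z => KL z * (Real.exp (a * z) + Real.exp (-(a * z)) - 2) with hF
  have hfc : Continuous f := hc.mul (by continuity)
  have hFc : Continuous F := hc.mul (by continuity)
  have hfi : Integrable f := my_integrable_of_supp (L := L) hfc
    (fun x hx => by simp [hf, h0 x hx])
  have hgi : Integrable (fun z => KL z * (Real.exp (-(a * z)) - 1)) :=
    my_integrable_of_supp (L := L) (hc.mul (by continuity))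
      (fun x hx => by simp [h0 x hx])
  have hFi : Integrable F := my_integrable_of_supp (L := L) hFc
    (fun x hx => by simp [hF, h0 x hx])
  have hsym : (∫ z, KL z * (Real.exp (-(a * z)) - 1)) = ∫ z, f z := by
    rw [← integral_neg_eq_self f volume]
    congr 1; funext z
    simp only [hf, heven z]
    ring_nf
  have hsum : (∫ z, F z) = 2 * ∫ z, f z := by
    have : (∫ z, F z) = (∫ z, f z) + ∫ z, KL z * (Real.exp (-(a * z)) - 1) := by
      rw [← integral_add hfi hgi]
      congr 1; funext z; simp only [hf, hF]; ring
    rw [this, hsym]; ring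
  have hFnn : 0 ≤ᵐ[volume] F := by
    filter_upwards with z
    exact mul_nonneg (hnn z) (my_cosh_nonneg (a * z))
  have hFpos : 0 < ∫ z, F z := by
    rw [integral_pos_iff_support_of_nonneg_ae hFnn hFi]
    have hopen : IsOpen {z | 0 < F z} := isOpen_lt continuous_const hFc
    have hz0mem : z0 ∈ {z | 0 < F z} :=
      mul_pos hKz0 (my_cosh_pos (mul_ne_zero ha hz0))
    refine lt_of_lt_of_le (hopen.measure_pos volume ⟨z0, hz0mem⟩) (measure_mono ?_)
    intro z hz; exact ne_of_gt hz
  rw [hsum] at hFpos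
  linarith

set_option maxHeartbeats 2000000 in
/-- Lemma 4.1, case 2, algebraic form: if `D > D_*`, there is
`c_*(D,L) > c_K` such that the system
`{ -D*φ_L a + c*a + d*μ*b/(ν + d*b) ≥ 0 , c*a - d*(a² + b²) ≥ r }` has a solution with
`a > 0`, `b > -ν/d` if and only if `c ≥ c_*(D,L)`. -/
theorem plane_wave_supersolutions_supercritical
    (K : ℝ → ℝ) (hK_even : ∀ x, K (-x) = K x) (hK_smooth : ContDiff ℝ (⊤ : ℕ∞) K)
    (hK_nonneg : ∀ x, 0 ≤ K x) (hK_supp : ∀ x, x ∉ Icc (-1 : ℝ) 1 → K x = 0)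
    (hK_mass : ∫ x, K x = 1)
    (L : ℝ) (hL : 0 < L)
    (KL : ℝ → ℝ) (hKL : ∀ x, KL x = (1 / L) * K (x / L))
    (φ : ℝ → ℝ) (hφ : ∀ a, φ a = ∫ z, KL z * (Real.exp (a * z) - 1))
    (d D μ ν r : ℝ) (hd : 0 < d) (hD : 0 < D) (hμ : 0 < μ) (hν : 0 < ν) (hr : 0 < r)
    (cK Dstar : ℝ)
    (hcK : cK = 2 * Real.sqrt (d * r))
    (hDstar : Dstar = 2 * r / φ (Real.sqrt (r / d)))
    (hDgt : Dstar < D) :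
    ∃ cstar : ℝ, cK < cstar ∧
      ∀ c : ℝ, 0 < c →
        ((∃ a b : ℝ, 0 < a ∧ -(ν / d) < b
            ∧ 0 ≤ -D * φ a + c * a + d * μ * b / (ν + d * b)
            ∧ r ≤ c * a - d * (a ^ 2 + b ^ 2))
          ↔ cstar ≤ c) := by
  -- properties of KL
  have hφeq : φ = fun a => ∫ z, KL z * (Real.exp (a * z) - 1) := funext hφ
  have hKLeq : KL = fun x => (1 / L) * K (x / L) := funext hKL
  have hKLc : Continuous KL := by
    rw [hKLeq]
    exact continuous_const.mul (hK_smooth.continuous.comp (continuous_id.div_const L))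
  have hKLnn : ∀ x, 0 ≤ KL x := by
    intro x; rw [hKL x]
    exact mul_nonneg (by positivity) (hK_nonneg _)
  have hKLsupp : ∀ x, x ∉ Icc (-L) L → KL x = 0 := by
    intro x hx
    rw [hKL x]
    have : x / L ∉ Icc (-1 : ℝ) 1 := by
      intro hmem
      apply hx
      constructor
      · have := hmem.1
        rw [le_div_iff₀ hL] at this; linarith
      · have := hmem.2
        rw [div_le_iff₀ hL] at this; linarith
    rw [hK_supp _ this, mul_zero]
  have hKLeven : ∀ x, KL (-x) = KL x := by
    intro x; rw [hKL x, hKL (-x), neg_div, hK_even]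
  -- existence of a positive point away from 0
  have hexK : ∃ x0 : ℝ, x0 ≠ 0 ∧ 0 < K x0 := by
    by_contra hcon
    push_neg at hcon
    have hae : K =ᵐ[volume] (fun _ => (0:ℝ)) := by
      rw [Filter.eventuallyEq_iff_exists_mem]
      refine ⟨{0}ᶜ, ?_, ?_⟩
      · rw [mem_ae_iff]
        simp
      · intro x hx
        have hx0 : x ≠ 0 := hx
        exact le_antisymm (hcon x hx0) (hK_nonneg x)
    rw [integral_congr_ae hae, integral_zero] at hK_mass
    exact one_ne_zero hK_mass.symm
  obtain ⟨x0, hx00, hx0pos⟩ := hexK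
  have hz0 : (L * x0) ≠ 0 := mul_ne_zero (ne_of_gt hL) hx00
  have hKz0 : 0 < KL (L * x0) := by
    rw [hKL]
    have : L * x0 / L = x0 := by field_simp
    rw [this]
    positivity
  -- φ facts
  have hφc : Continuous φ := by
    rw [hφeq]; exact my_phi_continuous hL hKLc hKLnn hKLsupp
  have hφpos : ∀ a : ℝ, a ≠ 0 → 0 < φ a := by
    intro a ha
    rw [hφ a]
    exact my_phi_pos hL hKLc hKLnn hKLsupp hKLeven hz0 hKz0 ha
  set astar := Real.sqrt (r / d) with hastar_def
  have hastar : 0 < astar := Real.sqrt_pos.mpr (by positivity)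
  have hφa : 0 < φ astar := hφpos _ (ne_of_gt hastar)
  have hDphi : 2 * r < D * φ astar := by
    rw [hDstar, div_lt_iff₀ hφa] at hDgt
    linarith
  have hcK0 : 0 < cK := by rw [hcK]; positivity
  have hsd : Real.sqrt d ^ 2 = d := Real.sq_sqrt hd.le
  have hsr : Real.sqrt r ^ 2 = r := Real.sq_sqrt hr.le
  have hsdr : Real.sqrt (d * r) = Real.sqrt d * Real.sqrt r := Real.sqrt_mul hd.le r
  -- the solution set with b ≥ 0
  set S : Set ℝ := {c | 0 < c ∧ ∃ a b : ℝ, 0 < a ∧ 0 ≤ b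
      ∧ 0 ≤ -D * φ a + c * a + d * μ * b / (ν + d * b)
      ∧ r ≤ c * a - d * (a ^ 2 + b ^ 2)} with hS_def
  have hSne : S.Nonempty := by
    refine ⟨max (max (D * φ 1) (r + d)) 1, ?_, 1, 0, one_pos, le_refl 0, ?_, ?_⟩
    · exact lt_of_lt_of_le one_pos (le_max_right _ _)
    · have h1 : D * φ 1 ≤ max (max (D * φ 1) (r + d)) 1 :=
        le_trans (le_max_left _ _) (le_max_left _ _)
      have h2 : d * μ * 0 / (ν + d * 0) = 0 := by simp
      rw [h2]
      linarith
    · have h1 : r + d ≤ max (max (D * φ 1) (r + d)) 1 :=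
        le_trans (le_max_right _ _) (le_max_left _ _)
      nlinarith
  have hSlow : ∀ c ∈ S, cK ≤ c := by
    rintro c ⟨hc, a, b, ha, hb, _, h2⟩
    have key : 2 * (Real.sqrt d * Real.sqrt r) * a ≤ r + d * a ^ 2 := by
      nlinarith [sq_nonneg (Real.sqrt r - Real.sqrt d * a)]
    rw [hcK, hsdr]
    have : 2 * (Real.sqrt d * Real.sqrt r) * a ≤ c * a := by nlinarith [sq_nonneg b]
    exact le_of_mul_le_mul_right this ha
  have hBdd : BddBelow S := ⟨cK, hSlow⟩
  set cstar := sInf S with hcstar_def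
  have hcKle : cK ≤ cstar := le_csInf hSne hSlow
  have hcstar0 : 0 < cstar := lt_of_lt_of_le hcK0 hcKle
  have hmem : cstar ∈ S := by
    have hseq : ∀ n : ℕ, ∃ c ∈ S, c < cstar + 1 / (n + 1) := by
      intro n
      apply exists_lt_of_csInf_lt hSne
      have : (0:ℝ) < 1 / (n + 1) := by positivity
      linarith
    choose cs hcsS hcslt using hseq
    have hcs_ge : ∀ n, cstar ≤ cs n := fun n => csInf_le hBdd (hcsS n)
    set C := cstar + 1 with hC_def
    have hC0 : 0 < C := by linarith
    have hcsC : ∀ n, cs n ≤ C := by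
      intro n
      have h1 : (1:ℝ) / (n + 1) ≤ 1 := by
        rw [div_le_one (by positivity)]
        simp
      have := hcslt n
      linarith
    have hcs_tendsto : Tendsto cs atTop (𝓝 cstar) := by
      have hup : Tendsto (fun n : ℕ => cstar + 1 / (n + 1 : ℝ)) atTop (𝓝 cstar) := by
        have := tendsto_one_div_add_atTop_nhds_zero_nat (𝕜 := ℝ)
        have h2 := tendsto_const_nhds (x := cstar) (f := atTop (α := ℕ)) |>.add this
        simpa using h2
      exact tendsto_of_tendsto_of_tendsto_of_le_of_le
        (tendsto_const_nhds.congr (fun n => rfl) : Tendsto (fun _ : ℕ => cstar) atTop (𝓝 cstar))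
        hup hcs_ge (fun n => (hcslt n).le)
    choose as bs has hbs h1s h2s using fun n => (hcsS n).2
    -- bounds
    have hasub : ∀ n, as n ≤ C / d := by
      intro n
      rw [le_div_iff₀ hd]
      nlinarith [h2s n, sq_nonneg (bs n), has n, hcsC n, hcs_ge n, hr]
    have haslb : ∀ n, r / C ≤ as n := by
      intro n
      rw [div_le_iff₀ hC0]
      nlinarith [h2s n, sq_nonneg (bs n), has n, hcsC n, hd, sq_nonneg (as n)]
    have hbsub : ∀ n, bs n ≤ C / d := by
      intro n
      have hb2 : d * (bs n) ^ 2 ≤ C * (C / d) := by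
        nlinarith [h2s n, has n, hcsC n, hr, sq_nonneg (as n), hasub n, hcs_ge n, hcstar0]
      have hCd : d * (C / d) = C := by field_simp
      nlinarith [hbs n, sq_nonneg (bs n - C / d), div_pos hC0 hd, hCd]
    have hcomp : IsCompact (Icc (r / C) (C / d) ×ˢ Icc (0:ℝ) (C / d)) :=
      isCompact_Icc.prod isCompact_Icc
    have hmemn : ∀ n, ((as n, bs n) : ℝ × ℝ) ∈ Icc (r / C) (C / d) ×ˢ Icc (0:ℝ) (C / d) := by
      intro n
      exact ⟨⟨haslb n, hasub n⟩, ⟨hbs n, hbsub n⟩⟩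
    obtain ⟨p, hp, ψ, hψ, hψt⟩ := hcomp.tendsto_subseq hmemn
    have hat : Tendsto (fun n => as (ψ n)) atTop (𝓝 p.1) :=
      (continuous_fst.tendsto p).comp hψt
    have hbt : Tendsto (fun n => bs (ψ n)) atTop (𝓝 p.2) :=
      (continuous_snd.tendsto p).comp hψt
    have hct : Tendsto (fun n => cs (ψ n)) atTop (𝓝 cstar) :=
      hcs_tendsto.comp hψ.tendsto_atTop
    have hp1 : 0 < p.1 := lt_of_lt_of_le (by positivity) hp.1.1
    have hp2 : 0 ≤ p.2 := hp.2.1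
    have hden : ν + d * p.2 ≠ 0 := by positivity
    have lim2 : Tendsto (fun n => cs (ψ n) * as (ψ n) - d * ((as (ψ n)) ^ 2 + (bs (ψ n)) ^ 2))
        atTop (𝓝 (cstar * p.1 - d * (p.1 ^ 2 + p.2 ^ 2))) := by
      exact (hct.mul hat).sub (tendsto_const_nhds.mul ((hat.pow 2).add (hbt.pow 2)))
    have lim1 : Tendsto (fun n => -D * φ (as (ψ n)) + cs (ψ n) * as (ψ n)
          + d * μ * bs (ψ n) / (ν + d * bs (ψ n)))
        atTop (𝓝 (-D * φ p.1 + cstar * p.1 + d * μ * p.2 / (ν + d * p.2))) := by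
      refine Tendsto.add (Tendsto.add ?_ (hct.mul hat)) ?_
      · exact tendsto_const_nhds.mul ((hφc.tendsto p.1).comp hat)
      · exact (tendsto_const_nhds.mul hbt).div
          (tendsto_const_nhds.add (tendsto_const_nhds.mul hbt)) hden
    refine ⟨hcstar0, p.1, p.2, hp1, hp2, ?_, ?_⟩
    · exact ge_of_tendsto' lim1 (fun n => h1s (ψ n))
    · exact ge_of_tendsto' lim2 (fun n => h2s (ψ n))
  have hgt : cK < cstar := by
    rcases lt_or_eq_of_le hcKle with h | h
    · exact h
    · exfalso
      obtain ⟨hc, a, b, ha, hb, h1, h2⟩ := hmem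
      rw [← h] at h1 h2
      rw [hcK, hsdr] at h1 h2
      have key : 2 * (Real.sqrt d * Real.sqrt r) * a ≤ r + d * a ^ 2 := by
        nlinarith [sq_nonneg (Real.sqrt r - Real.sqrt d * a)]
      have hbsq : d * b ^ 2 ≤ 0 := by linarith
      have hb0 : b = 0 := by
        have hb2 : b ^ 2 ≤ 0 := by nlinarith
        have := sq_nonneg b
        have : b ^ 2 = 0 := le_antisymm hb2 this
        exact pow_eq_zero_iff two_ne_zero |>.mp this
      rw [hb0] at h2
      have hexp : (Real.sqrt r - Real.sqrt d * a) ^ 2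
          = r + d * a ^ 2 - 2 * (Real.sqrt d * Real.sqrt r) * a := by
        linear_combination hsr + a ^ 2 * hsd
      have hsq0 : (Real.sqrt r - Real.sqrt d * a) ^ 2 = 0 := by
        have h2' : r + d * a ^ 2 ≤ 2 * (Real.sqrt d * Real.sqrt r) * a := by linarith
        have := sq_nonneg (Real.sqrt r - Real.sqrt d * a)
        linarith
      have heq : Real.sqrt d * a = Real.sqrt r := by
        have := pow_eq_zero_iff two_ne_zero |>.mp hsq0
        linarith
      have hsd0 : Real.sqrt d ≠ 0 := by positivity
      have haval : a = astar := by
        rw [hastar_def, Real.sqrt_div hr.le d, eq_div_iff hsd0, mul_comm]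
        exact heq
      have hprod : Real.sqrt d * Real.sqrt r * astar = r := by
        rw [← hsdr, ← Real.sqrt_mul (by positivity : (0:ℝ) ≤ d * r) (r / d)]
        have : d * r * (r / d) = r ^ 2 := by field_simp
        rw [this, Real.sqrt_sq hr.le]
      rw [hb0, haval] at h1
      have hzero : d * μ * 0 / (ν + d * 0) = 0 := by simp
      rw [hzero] at h1
      nlinarith [hDphi, h1, hprod]
  refine ⟨cstar, hgt, fun c hc => ⟨?_, ?_⟩⟩
  · rintro ⟨a, b, ha, hb, h1, h2⟩
    have hcS : c ∈ S := by
      rcases le_or_gt 0 b with hb0 | hb0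
      · exact ⟨hc, a, b, ha, hb0, h1, h2⟩
      · have hdenpos : 0 < ν + d * b := by
          have h := mul_lt_mul_of_pos_left hb hd
          have he : d * -(ν / d) = -ν := by field_simp
          rw [he] at h
          linarith
        have hterm : d * μ * b / (ν + d * b) ≤ 0 :=
          div_nonpos_of_nonpos_of_nonneg
            (by nlinarith [mul_pos hd hμ]) hdenpos.le
        refine ⟨hc, a, 0, ha, le_refl 0, ?_, ?_⟩
        · have hzero : d * μ * 0 / (ν + d * 0) = 0 := by simp
          rw [hzero]
          linarith
        · nlinarith [sq_nonneg b]
    exact csInf_le hBdd hcS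
  · intro hcge
    obtain ⟨_, a0, b0, ha0, hb0, h1, h2⟩ := hmem
    have hbgt : -(ν / d) < b0 := lt_of_lt_of_le (neg_lt_zero.mpr (by positivity)) hb0
    have hmul : cstar * a0 ≤ c * a0 := mul_le_mul_of_nonneg_right hcge ha0.le
    exact ⟨a0, b0, ha0, hbgt, by linarith, by linarith⟩
end

section
/- Let d, μ, ν, r > 0 and c_K := 2√(dr). Define W := { w > 0 : there exist α ∈ ℝ and β > −2ν with α² − 2wα = μβ/(r(2ν + β)) and α = (1 + β²/c_K²)/(2w) }. Then W is nonempty (in particular 1/2 ∈ W, witnessed by (α, β) = (1, 0)), inf W > 0, and the infimum is attained; the minimum w_* = w_*(d, μ, ν) satisfies 0 < w_* ≤ 1/2. -/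
open Set

noncomputable def gfun (μ ν r β : ℝ) : ℝ := μ * β / (r * (2 * ν + β))

noncomputable def hfun (μ ν r c2 β : ℝ) : ℝ :=
  (1 + β ^ 2 / c2) / (2 * Real.sqrt (1 + β ^ 2 / c2 + gfun μ ν r β))

lemma gfun_nonneg {μ ν r β : ℝ} (hμ : 0 < μ) (hν : 0 < ν) (hr : 0 < r) (hβ : 0 ≤ β) :
    0 ≤ gfun μ ν r β := by
  unfold gfun
  apply div_nonneg (by positivity) (by positivity)

lemma forward {μ ν r c2 w α β : ℝ} (hμ : 0 < μ) (hν : 0 < ν) (hr : 0 < r)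
    (hc2 : 0 < c2) (hw : 0 < w) (hβ : -(2 * ν) < β)
    (heq : α ^ 2 - 2 * w * α = gfun μ ν r β)
    (hα : α = (1 + β ^ 2 / c2) / (2 * w)) :
    w = hfun μ ν r c2 β ∧ (1 + β ^ 2 / c2) ^ 2 = 4 * w ^ 2 * (1 + β ^ 2 / c2 + gfun μ ν r β) := by
  set q := β ^ 2 / c2 with hq
  have hq0 : 0 ≤ q := by positivity
  set g := gfun μ ν r β with hg
  have h2w : 2 * w * α = 1 + q := by
    rw [hα]; field_simp
  have hkey : (1 + q) ^ 2 = 4 * w ^ 2 * (1 + q + g) := by nlinarith [heq, h2w, sq_nonneg α]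
  have hD : 1 + q + g = ((1 + q) / (2 * w)) ^ 2 := by
    field_simp
    nlinarith [hkey]
  have hsq : Real.sqrt (1 + q + g) = (1 + q) / (2 * w) := by
    rw [hD, Real.sqrt_sq (by positivity)]
  refine ⟨?_, hkey⟩
  unfold hfun
  rw [← hq, ← hg, hsq]
  have h1 : (0:ℝ) < 1 + q := by positivity
  field_simp

lemma converse {μ ν r c2 β : ℝ} (hμ : 0 < μ) (hν : 0 < ν) (hr : 0 < r)
    (hc2 : 0 < c2) (hβ : 0 ≤ β) :
    0 < hfun μ ν r c2 β ∧ ∃ α : ℝ, -(2 * ν) < β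
      ∧ α ^ 2 - 2 * hfun μ ν r c2 β * α = gfun μ ν r β
      ∧ α = (1 + β ^ 2 / c2) / (2 * hfun μ ν r c2 β) := by
  set q := β ^ 2 / c2 with hq
  have hq0 : 0 ≤ q := by positivity
  set g := gfun μ ν r β with hg
  have hg0 : 0 ≤ g := gfun_nonneg hμ hν hr hβ
  have hD : (0:ℝ) < 1 + q + g := by linarith
  set s := Real.sqrt (1 + q + g) with hs
  have hs0 : 0 < s := Real.sqrt_pos.mpr hD
  have hs2 : s ^ 2 = 1 + q + g := Real.sq_sqrt hD.le
  have hh : hfun μ ν r c2 β = (1 + q) / (2 * s) := rfl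
  have hhpos : 0 < hfun μ ν r c2 β := by rw [hh]; positivity
  refine ⟨hhpos, s, by linarith, ?_, ?_⟩
  · rw [hh]
    have h1 : (0:ℝ) < 1 + q := by positivity
    field_simp
    nlinarith [hs2]
  · rw [hh]
    have h1 : (0:ℝ) < 1 + q := by positivity
    field_simp

lemma bound {μ ν r c2 w β : ℝ} (hμ : 0 < μ) (hν : 0 < ν) (hr : 0 < r)
    (hc2 : 0 < c2) (hw : 0 < w) (hβ : -(2 * ν) < β) (hw12 : w ≤ 1 / 2)
    (hkey : (1 + β ^ 2 / c2) ^ 2 = 4 * w ^ 2 * (1 + β ^ 2 / c2 + gfun μ ν r β)) :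
    0 ≤ β ∧ β ^ 2 ≤ c2 * Real.sqrt (μ / r) := by
  set q := β ^ 2 / c2 with hq
  have hq0 : 0 ≤ q := by positivity
  set g := gfun μ ν r β with hg
  have hden : 0 < r * (2 * ν + β) := by nlinarith
  have h4w : 4 * w ^ 2 ≤ 1 := by nlinarith
  have h1qg : 0 ≤ 1 + q + g := by nlinarith [sq_nonneg (1 + q), mul_pos hw hw]
  have hgq : q + q ^ 2 ≤ g := by
    nlinarith [mul_nonneg h1qg (by linarith : (0:ℝ) ≤ 1 - 4 * w ^ 2)]
  have hg0 : 0 ≤ g := by nlinarith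
  have hβ0 : 0 ≤ β := by
    by_contra hc
    push_neg at hc
    have : g < 0 := by
      rw [hg, gfun]
      exact div_neg_of_neg_of_pos (by nlinarith) hden
    linarith
  have hgle : g ≤ μ / r := by
    rw [hg, gfun, div_le_div_iff₀ hden hr]
    nlinarith [mul_pos (mul_pos hμ hr) hν]
  have hq2 : q ^ 2 ≤ μ / r := by nlinarith
  have hqs : q ≤ Real.sqrt (μ / r) := by
    rw [show q = Real.sqrt (q ^ 2) from (Real.sqrt_sq hq0).symm]
    exact Real.sqrt_le_sqrt hq2
  refine ⟨hβ0, ?_⟩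
  calc β ^ 2 = c2 * q := by rw [hq]; field_simp
  _ ≤ c2 * Real.sqrt (μ / r) := by nlinarith

lemma hfun_continuousOn {μ ν r c2 : ℝ} (hμ : 0 < μ) (hν : 0 < ν) (hr : 0 < r)
    (hc2 : 0 < c2) : ContinuousOn (fun β => hfun μ ν r c2 β) (Ici 0) := by
  have hgc : ContinuousOn (fun β => gfun μ ν r β) (Ici 0) := by
    apply ContinuousOn.div (by fun_prop) (by fun_prop)
    intro x hx
    have hx0 : (0:ℝ) ≤ x := hx
    exact ne_of_gt (by nlinarith)
  have hic : ContinuousOn (fun β : ℝ => 1 + β ^ 2 / c2 + gfun μ ν r β) (Ici 0) :=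
    ContinuousOn.add (by fun_prop) hgc
  apply ContinuousOn.div (by fun_prop)
  · exact continuousOn_const.mul (Real.continuous_sqrt.comp_continuousOn hic)
  · intro x hx
    have hx0 : (0:ℝ) ≤ x := hx
    have hg0 : 0 ≤ gfun μ ν r x := gfun_nonneg hμ hν hr hx0
    have : 0 < Real.sqrt (1 + x ^ 2 / c2 + gfun μ ν r x) :=
      Real.sqrt_pos.mpr (by positivity)
    positivity

/-- the set `W` of reduced speeds `w > 0` for which the reduced algebraic
system (4.20) has a solution is nonempty (`1/2 ∈ W`, witnessed by `(α, β) = (1, 0)`), has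
positive infimum, and the infimum is attained: the minimum `w_*` satisfies `0 < w_* ≤ 1/2`. -/
theorem reduced_system_minimal_speed
    (d μ ν r : ℝ) (hd : 0 < d) (hμ : 0 < μ) (hν : 0 < ν) (hr : 0 < r)
    (cK : ℝ) (hcK : cK = 2 * Real.sqrt (d * r))
    (W : Set ℝ)
    (hW : W = {w : ℝ | 0 < w ∧ ∃ α β : ℝ, -(2 * ν) < β
      ∧ α ^ 2 - 2 * w * α = μ * β / (r * (2 * ν + β))
      ∧ α = (1 + β ^ 2 / cK ^ 2) / (2 * w)}) :
    W.Nonempty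
    ∧ (1 / 2 : ℝ) ∈ W
    ∧ 0 < sInf W
    ∧ ∃ wstar : ℝ, IsLeast W wstar ∧ 0 < wstar ∧ wstar ≤ 1 / 2 := by
  have hsr : 0 < Real.sqrt (d * r) := Real.sqrt_pos.mpr (mul_pos hd hr)
  have hcKpos : 0 < cK := by rw [hcK]; linarith
  have hc2 : 0 < cK ^ 2 := pow_pos hcKpos 2
  -- 1/2 ∈ W
  have hhalf : (1 / 2 : ℝ) ∈ W := by
    rw [hW]
    exact ⟨by norm_num, 1, 0, by linarith, by norm_num, by norm_num⟩
  -- compact interval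
  set B := Real.sqrt (cK ^ 2 * Real.sqrt (μ / r)) with hB
  have hB0 : 0 ≤ B := Real.sqrt_nonneg _
  have h0mem : (0:ℝ) ∈ Icc 0 B := ⟨le_refl 0, hB0⟩
  have hcont : ContinuousOn (fun β => hfun μ ν r (cK ^ 2) β) (Icc 0 B) :=
    (hfun_continuousOn hμ hν hr hc2).mono (fun x hx => hx.1)
  obtain ⟨βs, hβs, hmin⟩ := isCompact_Icc.exists_isMinOn ⟨0, h0mem⟩ hcont
  set wstar := hfun μ ν r (cK ^ 2) βs with hws
  -- wstar ∈ W
  obtain ⟨hwpos, α, hα1, hα2, hα3⟩ := converse hμ hν hr hc2 hβs.1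
  have hmemW : wstar ∈ W := by
    rw [hW]
    refine ⟨hwpos, α, βs, hα1, ?_, hα3⟩
    rw [hα2]; rfl
  -- wstar ≤ 1/2
  have h0 : hfun μ ν r (cK ^ 2) 0 = 1 / 2 := by
    unfold hfun gfun
    norm_num
  have hws12 : wstar ≤ 1 / 2 := by
    have := hmin h0mem
    simpa [h0] using this
  -- lower bound
  have hlb : ∀ w ∈ W, wstar ≤ w := by
    intro w hw
    rw [hW] at hw
    obtain ⟨hwp, a, β, hβ, heq, ha⟩ := hw
    have heq' : a ^ 2 - 2 * w * a = gfun μ ν r β := heq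
    obtain ⟨hwh, hkey⟩ := forward hμ hν hr hc2 hwp hβ heq' ha
    by_cases hle : w ≤ 1 / 2
    · obtain ⟨hβ0, hβ2⟩ := bound hμ hν hr hc2 hwp hβ hle hkey
      have hβB : β ∈ Icc 0 B := ⟨hβ0, by
        rw [show β = Real.sqrt (β ^ 2) from (Real.sqrt_sq hβ0).symm, hB]
        exact Real.sqrt_le_sqrt hβ2⟩
      rw [hwh]
      exact hmin hβB
    · push_neg at hle
      linarith
  have hleast : IsLeast W wstar := ⟨hmemW, hlb⟩
  refine ⟨⟨1/2, hhalf⟩, hhalf, ?_, wstar, hleast, hwpos, hws12⟩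
  rw [hleast.csInf_eq]
  exact hwpos
end

section
/- Let d, D, μ, ν > 0 and ρ > 0. Let a^∞ = a^∞(D,L) be the unique positive solution of D·φ_L(a) = μ. Then the system { b = (ν/d)·(μ/(μ − D·φ_L(a)) − 1) , a² + b² = ρ² } has exactly two solutions (a,b) with b > −ν/d, and they are of the form (a_*, b_*) and (−a_*, b_*) with 0 < a_* < min{ a^∞(D,L), ρ } and b_* > 0. (For the SIRT model with R_0 < 1, ρ = √(α(1 − R_0)/d) and a_* is the exponential decay rate of the final state at infinity.) -/
open MeasureTheory Real Set

set_option maxHeartbeats 1000000 in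
/-- the stationary exponential-wave system
`{ b = (ν/d)(μ/(μ - D φ_L a) - 1) , a² + b² = ρ² }` has exactly two solutions with
`b > -ν/d`, of the form `(a_*, b_*)` and `(-a_*, b_*)` with
`0 < a_* < min (a^∞(D,L)) ρ` and `b_* > 0`. -/
theorem stationary_wave_two_solutions
    (K : ℝ → ℝ) (hK_even : ∀ x, K (-x) = K x) (hK_smooth : ContDiff ℝ (⊤ : ℕ∞) K)
    (hK_nonneg : ∀ x, 0 ≤ K x) (hK_supp : ∀ x, x ∉ Icc (-1 : ℝ) 1 → K x = 0)
    (hK_mass : ∫ x, K x = 1)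
    (L : ℝ) (hL : 0 < L)
    (KL : ℝ → ℝ) (hKL : ∀ x, KL x = (1 / L) * K (x / L))
    (φ : ℝ → ℝ) (hφ : ∀ a, φ a = ∫ z, KL z * (Real.exp (a * z) - 1))
    (d D μ ν ρ : ℝ) (hd : 0 < d) (hD : 0 < D) (hμ : 0 < μ) (hν : 0 < ν) (hρ : 0 < ρ)
    (ainf : ℝ) (hainf_pos : 0 < ainf) (hainf : D * φ ainf = μ)
    (hainf_uniq : ∀ a : ℝ, 0 < a → D * φ a = μ → a = ainf) :
    ∃ astar bstar : ℝ,
      0 < astar ∧ astar < min ainf ρ ∧ 0 < bstar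
      ∧ (bstar = (ν / d) * (μ / (μ - D * φ astar) - 1) ∧ astar ^ 2 + bstar ^ 2 = ρ ^ 2)
      ∧ (bstar = (ν / d) * (μ / (μ - D * φ (-astar)) - 1)
          ∧ (-astar) ^ 2 + bstar ^ 2 = ρ ^ 2)
      ∧ ∀ a b : ℝ, -(ν / d) < b →
          b = (ν / d) * (μ / (μ - D * φ a) - 1) → a ^ 2 + b ^ 2 = ρ ^ 2 →
          (a = astar ∧ b = bstar) ∨ (a = -astar ∧ b = bstar) := by
  -- Basic properties of KL
  have hKLc : Continuous KL := by
    have h : Continuous fun x => (1 / L) * K (x / L) :=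
      continuous_const.mul (hK_smooth.continuous.comp (continuous_id.div_const L))
    exact (funext hKL : KL = _) ▸ h
  have hKLnn : ∀ x, 0 ≤ KL x := fun x => by
    rw [hKL]; exact mul_nonneg (by positivity) (hK_nonneg _)
  have hKLeven : ∀ x, KL (-x) = KL x := fun x => by
    rw [hKL, hKL, neg_div, hK_even]
  have hKLsupp : ∀ x, x ∉ Icc (-L) L → KL x = 0 := by
    intro x hx
    rw [hKL, hK_supp, mul_zero]
    intro hmem
    have h1 : (-1 : ℝ) * L ≤ x := (le_div_iff₀ hL).mp hmem.1
    have h2 : x ≤ L := (div_le_one hL).mp hmem.2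
    exact hx ⟨by linarith, h2⟩
  have hint : ∀ g : ℝ → ℝ, Continuous g → Integrable (fun z => KL z * g z) := by
    intro g hg
    exact (hKLc.mul hg).integrable_of_hasCompactSupport
      (HasCompactSupport.intro isCompact_Icc fun x hx => by rw [Pi.mul_apply, hKLsupp x hx, zero_mul])
  have hKLint : Integrable KL := by
    have := hint (fun _ => (1 : ℝ)) continuous_const
    simpa using this
  have hKLmass : ∫ x, KL x = 1 := by
    have h1 : ∫ x, KL x = ∫ x, (1 / L) * K (x / L) := by
      congr 1; funext x; exact hKL x
    rw [h1, integral_const_mul _ _, Measure.integral_comp_div K L, hK_mass,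
      abs_of_pos hL]
    simp
    field_simp
  -- cosh representation
  have hcontI : ∀ a : ℝ, Continuous fun z : ℝ => Real.cosh (a * z) - 1 := fun a =>
    (Real.continuous_cosh.comp (continuous_const.mul continuous_id)).sub continuous_const
  have hIc : ∀ a : ℝ, Integrable (fun z => KL z * (Real.cosh (a * z) - 1)) := fun a =>
    hint _ (hcontI a)
  have hφcosh : ∀ a, φ a = ∫ z, KL z * (Real.cosh (a * z) - 1) := by
    intro a
    have h1 : Integrable (fun z => KL z * (Real.exp (a * z) - 1)) :=
      hint _ ((Real.continuous_exp.comp (continuous_const.mul continuous_id)).sub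
        continuous_const)
    have h2 : Integrable (fun z => KL z * (Real.exp (-(a * z)) - 1)) :=
      hint _ ((Real.continuous_exp.comp (continuous_const.mul continuous_id).neg).sub
        continuous_const)
    have hneg : (∫ z, KL z * (Real.exp (-(a * z)) - 1)) = φ a := by
      have heq : (fun z => KL z * (Real.exp (-(a * z)) - 1))
          = fun z => KL (-z) * (Real.exp (a * -z) - 1) := by
        funext z; rw [hKLeven z, mul_neg]
      rw [heq]
      exact (integral_neg_eq_self (fun z => KL z * (Real.exp (a * z) - 1)) volume).trans
        (hφ a).symm
    have hadd : φ a + φ a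
        = ∫ z, (KL z * (Real.exp (a * z) - 1) + KL z * (Real.exp (-(a * z)) - 1)) := by
      rw [integral_add h1 h2, ← hφ a, hneg]
    have hcosh2 : (fun z => KL z * (Real.exp (a * z) - 1) + KL z * (Real.exp (-(a * z)) - 1))
        = fun z => 2 * (KL z * (Real.cosh (a * z) - 1)) := by
      funext z; rw [Real.cosh_eq]; ring
    have h2int : φ a + φ a = 2 * ∫ z, KL z * (Real.cosh (a * z) - 1) := by
      rw [hadd, hcosh2, integral_const_mul _ _]
    linarith
  have hφeven : ∀ a, φ (-a) = φ a := by
    intro a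
    rw [hφcosh, hφcosh]
    simp only [neg_mul, Real.cosh_neg]
  have hφ0 : φ 0 = 0 := by
    rw [hφcosh]; simp
  -- positivity of support measure
  have hsupp_pos : 0 < volume (Function.support KL) := by
    have := (integral_pos_iff_support_of_nonneg hKLnn hKLint).mp (by rw [hKLmass]; norm_num)
    exact this
  -- strict monotonicity of φ on [0, ∞)
  have hmono : ∀ x y : ℝ, 0 ≤ x → x < y → φ x < φ y := by
    intro x y hx hxy
    have hy : 0 ≤ y := le_of_lt (lt_of_le_of_lt hx hxy)
    rw [hφcosh, hφcosh, ← sub_pos, ← integral_sub (hIc y) (hIc x)]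
    have hnn : ∀ z, 0 ≤ KL z * (Real.cosh (y * z) - 1) - KL z * (Real.cosh (x * z) - 1) := by
      intro z
      have hc : Real.cosh (x * z) ≤ Real.cosh (y * z) := by
        rw [Real.cosh_le_cosh, abs_mul, abs_mul, abs_of_nonneg hx, abs_of_nonneg hy]
        exact mul_le_mul_of_nonneg_right hxy.le (abs_nonneg z)
      nlinarith [hKLnn z]
    refine (integral_pos_iff_support_of_nonneg hnn ((hIc y).sub (hIc x))).mpr ?_
    have hsub : Function.support KL \ {0}
        ⊆ Function.support fun z => KL z * (Real.cosh (y * z) - 1)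
          - KL z * (Real.cosh (x * z) - 1) := by
      rintro z ⟨hz, hz0⟩
      have hKz : 0 < KL z := lt_of_le_of_ne (hKLnn z) (Ne.symm hz)
      have hz0' : z ≠ 0 := by simpa using hz0
      have hc : Real.cosh (x * z) < Real.cosh (y * z) := by
        rw [Real.cosh_lt_cosh, abs_mul, abs_mul, abs_of_nonneg hx, abs_of_nonneg hy]
        exact mul_lt_mul_of_pos_right hxy (abs_pos.mpr hz0')
      have : 0 < KL z * (Real.cosh (y * z) - 1) - KL z * (Real.cosh (x * z) - 1) := by
        nlinarith
      exact ne_of_gt this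
    calc (0 : ENNReal) < volume (Function.support KL \ {0}) := by
          rwa [measure_diff_null (measure_singleton 0)]
      _ ≤ _ := measure_mono hsub
  -- continuity of φ
  have hφcont : Continuous φ := by
    have hrepr : φ = fun a => ∫ z, KL z * (Real.cosh (a * z) - 1) := funext hφcosh
    rw [hrepr, continuous_iff_continuousAt]
    intro a0
    apply continuousAt_of_dominated
      (bound := fun z => KL z * (Real.cosh ((|a0| + 1) * L) + 1))
    · exact Filter.Eventually.of_forall fun a => (hIc a).aestronglyMeasurable
    · filter_upwards [Metric.ball_mem_nhds a0 one_pos] with a ha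
      refine Filter.Eventually.of_forall fun z => ?_
      by_cases hz : KL z = 0
      · simp [hz]
      · have hzL : z ∈ Icc (-L) L := by
          by_contra h; exact hz (hKLsupp z h)
        have hzabs : |z| ≤ L := abs_le.mpr ⟨hzL.1, hzL.2⟩
        have ha' : |a| ≤ |a0| + 1 := by
          have h1 : |a - a0| < 1 := by
            have := Metric.mem_ball.mp ha
            rwa [Real.dist_eq] at this
          calc |a| = |a - a0 + a0| := by ring_nf
            _ ≤ |a - a0| + |a0| := abs_add_le _ _
            _ ≤ |a0| + 1 := by linarith
        have hboundc : Real.cosh (a * z) ≤ Real.cosh ((|a0| + 1) * L) := by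
          rw [Real.cosh_le_cosh, abs_mul]
          have : (0:ℝ) ≤ (|a0| + 1) * L := by positivity
          rw [abs_of_nonneg this]
          exact mul_le_mul ha' hzabs (abs_nonneg z) (by positivity)
        have h1le : (1:ℝ) ≤ Real.cosh (a * z) := Real.one_le_cosh _
        rw [Real.norm_eq_abs, abs_mul, abs_of_nonneg (hKLnn z)]
        apply mul_le_mul_of_nonneg_left _ (hKLnn z)
        rw [abs_of_nonneg (by linarith)]
        linarith
    · exact hint _ continuous_const
    · refine Filter.Eventually.of_forall fun z => ?_
      exact (continuous_const.mul ((Real.continuous_cosh.comp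
        (continuous_id.mul continuous_const)).sub continuous_const)).continuousAt
  -- the pressure function P and basic facts
  have hφainf : φ ainf = μ / D := by field_simp at hainf ⊢; linarith
  have hφnonneg : ∀ x : ℝ, 0 ≤ x → 0 ≤ φ x := by
    intro x hx
    rcases eq_or_lt_of_le hx with h | h
    · rw [← h, hφ0]
    · have := hmono 0 x le_rfl h; rw [hφ0] at this; linarith
  have hPpos : ∀ x : ℝ, 0 ≤ x → x < ainf → 0 < μ - D * φ x := by
    intro x hx hxa
    have h := hmono x ainf hx hxa
    nlinarith
  have hPle : ∀ x : ℝ, 0 ≤ x → μ - D * φ x ≤ μ := by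
    intro x hx
    nlinarith [hφnonneg x hx]
  -- helper: g x < g y for 0 ≤ x < y < ainf, and g nonneg
  have hgnn : ∀ x : ℝ, 0 ≤ x → x < ainf → 0 ≤ (ν / d) * (μ / (μ - D * φ x) - 1) := by
    intro x hx hxa
    have hp := hPpos x hx hxa
    have h1 : (1:ℝ) ≤ μ / (μ - D * φ x) := (one_le_div hp).mpr (hPle x hx)
    have : (0:ℝ) ≤ ν / d := by positivity
    nlinarith
  have hglt : ∀ x y : ℝ, 0 ≤ x → x < y → y < ainf →
      (ν / d) * (μ / (μ - D * φ x) - 1) < (ν / d) * (μ / (μ - D * φ y) - 1) := by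
    intro x y hx hxy hy
    have hpy := hPpos y (le_of_lt (lt_of_le_of_lt hx hxy)) hy
    have hpx := hPpos x hx (lt_trans hxy hy)
    have hφlt := hmono x y hx hxy
    have hdiv : μ / (μ - D * φ x) < μ / (μ - D * φ y) :=
      div_lt_div_of_pos_left hμ hpy (by nlinarith)
    have : (0:ℝ) < ν / d := by positivity
    nlinarith
  -- F := a² + g(a)²  strictly increasing on [0, ainf)
  set F : ℝ → ℝ := fun a => a ^ 2 + ((ν / d) * (μ / (μ - D * φ a) - 1)) ^ 2 with hF
  have hFmono : ∀ x y : ℝ, 0 ≤ x → x < y → y < ainf → F x < F y := by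
    intro x y hx hxy hy
    simp only [hF]
    have h1 : x ^ 2 < y ^ 2 := by nlinarith
    have h2 := hglt x y hx hxy hy
    have h3 := hgnn x hx (lt_trans hxy hy)
    nlinarith
  -- find c < ainf with F c > ρ²
  have hεpos : 0 < μ * ν / (ν + d * ρ) := by positivity
  obtain ⟨δ, hδpos, hδ⟩ : ∃ δ > 0, ∀ x : ℝ, |x - ainf| < δ →
      |(μ - D * φ x) - (μ - D * φ ainf)| < μ * ν / (ν + d * ρ) := by
    have hcont : Continuous fun x => μ - D * φ x :=
      continuous_const.sub (continuous_const.mul hφcont)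
    have := Metric.continuous_iff.mp hcont ainf _ hεpos
    obtain ⟨δ, hδpos, hδ⟩ := this
    exact ⟨δ, hδpos, fun x hx => by
      have := hδ x (by rwa [Real.dist_eq]); rwa [Real.dist_eq] at this⟩
  set c : ℝ := max (ainf - δ / 2) (ainf / 2) with hc
  have hc_lt : c < ainf := by
    apply max_lt <;> linarith
  have hc_pos : 0 < c := lt_of_lt_of_le (by linarith) (le_max_right _ _)
  have hPc : μ - D * φ c < μ * ν / (ν + d * ρ) := by
    have h1 : |c - ainf| < δ := by
      have h2 : ainf - δ / 2 ≤ c := le_max_left _ _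
      rw [abs_lt]; constructor <;> [linarith; linarith]
    have := hδ c h1
    have hPa : μ - D * φ ainf = 0 := by rw [hφainf]; field_simp; ring
    rw [hPa, sub_zero] at this
    calc μ - D * φ c ≤ |μ - D * φ c| := le_abs_self _
      _ < _ := this
  have hgc : ρ < (ν / d) * (μ / (μ - D * φ c) - 1) := by
    have hp := hPpos c hc_pos.le hc_lt
    have h1 : μ / (μ - D * φ c) > μ / (μ * ν / (ν + d * ρ)) :=
      div_lt_div_of_pos_left hμ hp hPc
    have h2 : μ / (μ * ν / (ν + d * ρ)) = (ν + d * ρ) / ν := by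
      field_simp
    rw [h2] at h1
    have h3 : (ν + d * ρ) / ν = 1 + d * ρ / ν := by field_simp
    rw [h3] at h1
    have h4 : d * ρ / ν < μ / (μ - D * φ c) - 1 := by linarith
    have h5 : (0:ℝ) < ν / d := by positivity
    have h6 : (ν / d) * (d * ρ / ν) = ρ := by
      field_simp
    calc ρ = (ν / d) * (d * ρ / ν) := h6.symm
      _ < _ := mul_lt_mul_of_pos_left h4 h5
  have hFc : ρ ^ 2 < F c := by
    have h3 := hgnn c hc_pos.le hc_lt
    simp only [hF]
    nlinarith
  -- continuity of F on [0, c]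
  have hFcont : ContinuousOn F (Icc 0 c) := by
    have hne : ∀ x ∈ Icc (0:ℝ) c, μ - D * φ x ≠ 0 := by
      intro x hx
      exact ne_of_gt (hPpos x hx.1 (lt_of_le_of_lt hx.2 hc_lt))
    apply ContinuousOn.add (continuous_pow 2).continuousOn
    apply ContinuousOn.pow
    apply ContinuousOn.mul continuousOn_const
    apply ContinuousOn.sub _ continuousOn_const
    exact ContinuousOn.div continuousOn_const
      (continuous_const.sub (continuous_const.mul hφcont)).continuousOn hne
  have hF0 : F 0 = 0 := by
    simp only [hF, hφ0]
    field_simp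
    simp [hμ.ne']
  -- IVT
  have hmem : ρ ^ 2 ∈ Icc (F 0) (F c) := ⟨by rw [hF0]; positivity, hFc.le⟩
  obtain ⟨astar, hastar_mem, hastar_eq⟩ :=
    intermediate_value_Icc hc_pos.le hFcont hmem
  have hastar_pos : 0 < astar := by
    rcases eq_or_lt_of_le hastar_mem.1 with h | h
    · exfalso
      rw [← h, hF0] at hastar_eq
      nlinarith
    · exact h
  have hastar_lt : astar < ainf := lt_of_le_of_lt hastar_mem.2 hc_lt
  set bstar : ℝ := (ν / d) * (μ / (μ - D * φ astar) - 1) with hbstar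
  have hbstar_pos : 0 < bstar := by
    have h0 : (ν / d) * (μ / (μ - D * φ 0) - 1) = 0 := by
      rw [hφ0]; field_simp; simp [hμ.ne']
    have := hglt 0 astar le_rfl hastar_pos hastar_lt
    rw [h0] at this
    exact this
  have hsq : astar ^ 2 + bstar ^ 2 = ρ ^ 2 := hastar_eq
  have hastar_ρ : astar < ρ := by
    have h1 : astar ^ 2 < ρ ^ 2 := by nlinarith
    exact lt_of_pow_lt_pow_left₀ 2 hρ.le h1
  refine ⟨astar, bstar, hastar_pos, lt_min hastar_lt hastar_ρ, hbstar_pos,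
    ⟨rfl, hsq⟩, ⟨by rw [hφeven], by rw [neg_pow]; simpa using hsq⟩, ?_⟩
  -- uniqueness
  intro a b hb hbeq hsum
  have hφabs : φ a = φ |a| := by
    rcases abs_cases a with ⟨h, _⟩ | ⟨h, _⟩
    · rw [h]
    · rw [h, hφeven]
  have habs_lt : |a| < ainf := by
    rcases lt_trichotomy |a| ainf with h | h | h
    · exact h
    · exfalso
      have : μ - D * φ a = 0 := by rw [hφabs, h, hφainf]; field_simp; ring
      rw [this, div_zero] at hbeq
      rw [hbeq] at hb
      simp at hb
    · exfalso
      have hφgt : φ ainf < φ |a| := hmono ainf |a| hainf_pos.le h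
      have hPneg : μ - D * φ a < 0 := by
        rw [hφabs]
        linarith [mul_lt_mul_of_pos_left hφgt hD, hainf]
      have hdivneg : μ / (μ - D * φ a) < 0 := div_neg_of_pos_of_neg hμ hPneg
      have : b < -(ν / d) := by
        rw [hbeq]
        have h5 : (0:ℝ) < ν / d := by positivity
        nlinarith
      linarith
  have hb_abs : b = (ν / d) * (μ / (μ - D * φ |a|) - 1) := by rw [← hφabs]; exact hbeq
  have hFa : F |a| = ρ ^ 2 := by
    simp only [hF, ← hb_abs, sq_abs]
    exact hsum
  have habs_eq : |a| = astar := by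
    rcases lt_trichotomy (|a|) astar with h | h | h
    · exfalso
      have := hFmono (|a|) astar (abs_nonneg a) h hastar_lt
      rw [hFa, hastar_eq] at this
      exact lt_irrefl _ this
    · exact h
    · exfalso
      have := hFmono astar (|a|) hastar_pos.le h habs_lt
      rw [hFa, hastar_eq] at this
      exact lt_irrefl _ this
  have hbb : b = bstar := by
    rw [hb_abs, habs_eq]
  rcases (abs_eq hastar_pos.le).mp habs_eq with h | h
  · exact Or.inl ⟨h, hbb⟩
  · exact Or.inr ⟨h, hbb⟩
end

section
/- Fix d, D, μ, ν > 0 and ρ > 0, and for L > 0 let (a_*(L), b_*(L)) with a_*(L) > 0 be the solution of the system { b = (ν/d)·(μ/(μ − D·φ_L(a)) − 1) , a² + b² = ρ² , b > −ν/d } given by its unique solution with positive first component. Then: (i) as L → +∞, a_*(L) → 0, b_*(L) → ρ, and D·φ_1(a_*(L)·L) → dμρ/(ν + dρ); (ii) as L → 0⁺, a_*(L) → ρ and b_*(L) → 0. -/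
open MeasureTheory Real Set Filter


section Aux
variable {K : ℝ → ℝ}

lemma aux_integrable (hKc : Continuous K)
    (hK_supp : ∀ x, x ∉ Icc (-1:ℝ) 1 → K x = 0) {f : ℝ → ℝ} (hf : Continuous f) :
    Integrable (fun z => K z * f z) := by
  apply Continuous.integrable_of_hasCompactSupport (hKc.mul hf)
  apply HasCompactSupport.intro (isCompact_Icc (a := (-1:ℝ)) (b := 1))
  intro x hx
  simp [hK_supp x hx]

lemma aux_phi_cosh (hKc : Continuous K) (hK_even : ∀ x, K (-x) = K x)
    (hK_supp : ∀ x, x ∉ Icc (-1:ℝ) 1 → K x = 0) (s : ℝ) :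
    ∫ z, K z * (Real.exp (s*z) - 1) = ∫ z, K z * (Real.cosh (s*z) - 1) := by
  have hneg : ∫ z, K z * (Real.exp (-(s*z)) - 1) = ∫ z, K z * (Real.exp (s*z) - 1) := by
    have := MeasureTheory.Measure.integral_comp_mul_left
      (fun z => K z * (Real.exp (s*z) - 1)) (-1)
    simp only [abs_neg, abs_one, inv_neg, inv_one, one_smul, abs_inv] at this
    rw [← this]
    congr 1
    ext z
    rw [show (-1:ℝ) * z = -z by ring, hK_even]
    ring_nf
  have h1 : Integrable (fun z => K z * (Real.exp (s*z) - 1)) :=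
    aux_integrable hKc hK_supp (by continuity)
  have h2 : Integrable (fun z => K z * (Real.exp (-(s*z)) - 1)) :=
    aux_integrable hKc hK_supp (by continuity)
  have key : (∫ z, K z * (Real.exp (s*z) - 1)) + (∫ z, K z * (Real.exp (-(s*z)) - 1))
      = ∫ z, (2 : ℝ) * (K z * (Real.cosh (s*z) - 1)) := by
    rw [← integral_add h1 h2]
    congr 1
    ext z
    rw [Real.cosh_eq]
    ring
  rw [integral_const_mul] at key
  rw [hneg] at key
  linarith

lemma aux_phi_nonneg (hKc : Continuous K) (hK_even : ∀ x, K (-x) = K x)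
    (hK_nonneg : ∀ x, 0 ≤ K x)
    (hK_supp : ∀ x, x ∉ Icc (-1:ℝ) 1 → K x = 0) (s : ℝ) :
    0 ≤ ∫ z, K z * (Real.exp (s*z) - 1) := by
  rw [aux_phi_cosh hKc hK_even hK_supp]
  apply integral_nonneg
  intro z
  simp only [Pi.zero_apply]
  have h1 := Real.one_le_cosh (s*z)
  have h2 := hK_nonneg z
  nlinarith

lemma aux_phi_mono (hKc : Continuous K) (hK_even : ∀ x, K (-x) = K x)
    (hK_nonneg : ∀ x, 0 ≤ K x)
    (hK_supp : ∀ x, x ∉ Icc (-1:ℝ) 1 → K x = 0) {s t : ℝ} (hs : 0 ≤ s) (hst : s ≤ t) :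
    (∫ z, K z * (Real.exp (s*z) - 1)) ≤ ∫ z, K z * (Real.exp (t*z) - 1) := by
  rw [aux_phi_cosh hKc hK_even hK_supp, aux_phi_cosh hKc hK_even hK_supp]
  have hc : ∀ u:ℝ, Continuous (fun z => Real.cosh (u*z) - 1) := fun u =>
    (Real.continuous_cosh.comp (continuous_const.mul continuous_id)).sub continuous_const
  apply integral_mono
  · exact aux_integrable hKc hK_supp (hc s)
  · exact aux_integrable hKc hK_supp (hc t)
  · intro z
    have h1 : Real.cosh (s*z) ≤ Real.cosh (t*z) := by
      rw [Real.cosh_le_cosh, abs_mul, abs_mul]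
      have : |s| ≤ |t| := by
        rw [abs_of_nonneg hs]; exact hst.trans (le_abs_self t)
      exact mul_le_mul_of_nonneg_right this (abs_nonneg z)
    have := hK_nonneg z
    dsimp only
    nlinarith

lemma aux_phi_upper (hKc : Continuous K) (hK_nonneg : ∀ x, 0 ≤ K x)
    (hK_supp : ∀ x, x ∉ Icc (-1:ℝ) 1 → K x = 0) (hK_mass : ∫ x, K x = 1)
    {s : ℝ} (hs : 0 ≤ s) :
    (∫ z, K z * (Real.exp (s*z) - 1)) ≤ Real.exp s - 1 := by
  have h1 : (∫ z, K z * (Real.exp (s*z) - 1)) ≤ ∫ z, K z * (Real.exp s - 1) := by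
    apply integral_mono
    · exact aux_integrable hKc hK_supp (by continuity)
    · exact aux_integrable hKc hK_supp continuous_const
    · intro z
      by_cases hz : z ∈ Icc (-1:ℝ) 1
      · have h2 : s * z ≤ s := by nlinarith [hz.1, hz.2]
        have := Real.exp_le_exp.2 h2
        have := hK_nonneg z
        dsimp only
        nlinarith
      · simp [hK_supp z hz]
  calc (∫ z, K z * (Real.exp (s*z) - 1)) ≤ ∫ z, K z * (Real.exp s - 1) := h1
    _ = (∫ z, K z) * (Real.exp s - 1) := integral_mul_const _ _
    _ = Real.exp s - 1 := by rw [hK_mass]; ring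

end Aux


section Aux2
variable {K : ℝ → ℝ}

-- there is a positive point where K is positive
lemma aux_pos_point (hKc : Continuous K) (hK_even : ∀ x, K (-x) = K x)
    (hK_nonneg : ∀ x, 0 ≤ K x) (hK_mass : ∫ x, K x = 1) :
    ∃ x₁ : ℝ, 0 < x₁ ∧ 0 < K x₁ := by
  -- there is some point with K > 0
  have h0 : ∃ x₀ : ℝ, 0 < K x₀ := by
    by_contra h
    push_neg at h
    have : K = fun _ => (0:ℝ) := funext fun x => le_antisymm (h x) (hK_nonneg x)
    rw [this] at hK_mass
    simp at hK_mass
  obtain ⟨x₀, hx₀⟩ := h0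
  -- WLOG the point is ≥ 0
  have h1 : 0 < K |x₀| := by
    rcases abs_cases x₀ with ⟨h, _⟩ | ⟨h, _⟩
    · rwa [h]
    · rw [h, hK_even]; exact hx₀
  set y := |x₀| with hy
  have hy0 : 0 ≤ y := abs_nonneg x₀
  -- openness gives a nearby strictly positive point
  have hopen : IsOpen {x : ℝ | 0 < K x} := isOpen_lt continuous_const hKc
  obtain ⟨ε, hε, hball⟩ := Metric.isOpen_iff.1 hopen y h1
  refine ⟨y + ε/2, by linarith, hball ?_⟩
  simp [Real.dist_eq, abs_of_nonneg, hε.le]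
  linarith [abs_of_nonneg (le_of_lt (half_pos hε))]

lemma aux_phi_unbounded (hKc : Continuous K) (hK_even : ∀ x, K (-x) = K x)
    (hK_nonneg : ∀ x, 0 ≤ K x)
    (hK_supp : ∀ x, x ∉ Icc (-1:ℝ) 1 → K x = 0) (hK_mass : ∫ x, K x = 1)
    (c₀ : ℝ) :
    ∃ s₀ : ℝ, 0 < s₀ ∧ c₀ < ∫ z, K z * (Real.exp (s₀*z) - 1) := by
  obtain ⟨x₁, hx₁, hKx₁⟩ := aux_pos_point hKc hK_even hK_nonneg hK_mass
  -- K ≥ K x₁ / 2 on a ball around x₁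
  have hopen : IsOpen {x : ℝ | K x₁ / 2 < K x} := isOpen_lt continuous_const hKc
  obtain ⟨δ, hδ, hball⟩ := Metric.isOpen_iff.1 hopen x₁ (by simp only [mem_setOf_eq]; linarith)
  set η := min (δ/2) (x₁/2) with hη
  have hη0 : 0 < η := lt_min (half_pos hδ) (half_pos hx₁)
  have hηδ : η < δ := lt_of_le_of_lt (min_le_left _ _) (by linarith)
  have hηx : η ≤ x₁/2 := min_le_right _ _
  set c₁ := x₁ - η with hc₁
  have hc₁0 : 0 < c₁ := by simp only [hc₁]; linarith
  set m := K x₁ / 2 with hm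
  have hm0 : 0 < m := half_pos hKx₁
  set S := Icc (x₁ - η) (x₁ + η) with hS
  -- for every s ≥ 0, φ s ≥ m * (cosh (s*c₁) - 1) * (2*η)
  have hlow : ∀ s : ℝ, 0 ≤ s →
      m * (Real.cosh (s*c₁) - 1) * (2*η) ≤ ∫ z, K z * (Real.exp (s*z) - 1) := by
    intro s hs
    rw [aux_phi_cosh hKc hK_even hK_supp]
    have hint : Integrable (fun z => K z * (Real.cosh (s*z) - 1)) :=
      aux_integrable hKc hK_supp
        ((Real.continuous_cosh.comp (continuous_const.mul continuous_id)).sub continuous_const)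
    have hnn : ∀ z : ℝ, 0 ≤ K z * (Real.cosh (s*z) - 1) := by
      intro z
      have h1 := Real.one_le_cosh (s*z)
      have h2 := hK_nonneg z
      nlinarith
    have step1 : ∫ z in S, K z * (Real.cosh (s*z) - 1) ≤ ∫ z, K z * (Real.cosh (s*z) - 1) :=
      setIntegral_le_integral hint (Eventually.of_forall hnn)
    have step2 : (m * (Real.cosh (s*c₁) - 1)) * (volume S).toReal
        ≤ ∫ z in S, K z * (Real.cosh (s*z) - 1) := by
      apply setIntegral_ge_of_const_le_real measurableSet_Icc
      · rw [Real.volume_Icc]; exact ENNReal.ofReal_ne_top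
      · intro z hz
        have hz1 : c₁ ≤ z := hz.1
        have hKz : m ≤ K z := le_of_lt (hball (by
          rw [Metric.mem_ball, Real.dist_eq, abs_sub_lt_iff]
          constructor <;> [linarith [hz.2]; linarith [hz.1]]))
        have hcosh : Real.cosh (s*c₁) ≤ Real.cosh (s*z) := by
          rw [Real.cosh_le_cosh, abs_mul, abs_mul, abs_of_nonneg hs,
            abs_of_nonneg hc₁0.le, abs_of_nonneg (le_trans hc₁0.le hz1)]
          exact mul_le_mul_of_nonneg_left hz1 hs
        have h1 := Real.one_le_cosh (s*c₁)
        nlinarith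
      · exact hint.integrableOn
    have hvol : (volume S).toReal = 2*η := by
      rw [hS, Real.volume_Icc, ENNReal.toReal_ofReal (by linarith)]
      ring
    rw [hvol] at step2
    calc m * (Real.cosh (s*c₁) - 1) * (2*η)
        ≤ ∫ z in S, K z * (Real.cosh (s*z) - 1) := step2
      _ ≤ _ := step1
  -- choose s₀ from unboundedness of cosh
  have htend : Tendsto (fun s : ℝ => m * (Real.cosh (s*c₁) - 1) * (2*η)) atTop atTop := by
    have h1 : Tendsto (fun s : ℝ => s * c₁) atTop atTop :=
      Tendsto.atTop_mul_const hc₁0 tendsto_id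
    have h2 : Tendsto Real.cosh atTop atTop := by
      apply tendsto_atTop_mono (fun t => ?_) ((Real.tendsto_exp_atTop).atTop_div_const two_pos)
      rw [Real.cosh_eq]
      have := Real.exp_pos (-t)
      linarith
    have h3 := (h2.comp h1).atTop_add tendsto_const_nhds (C := (-1:ℝ))
    have h4 : Tendsto (fun s : ℝ => Real.cosh (s*c₁) - 1) atTop atTop := by
      refine h3.congr fun s => ?_
      simp [Function.comp]
      ring
    exact (h4.const_mul_atTop hm0).atTop_mul_const (by linarith)
  obtain ⟨s₀, hs₀⟩ := ((htend.eventually_gt_atTop c₀).and (eventually_gt_atTop 0)).exists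
  exact ⟨s₀, hs₀.2, lt_of_lt_of_le hs₀.1 (hlow s₀ hs₀.2.le)⟩

end Aux2


section Aux3
variable {K : ℝ → ℝ}

lemma aux_phi_scale (L : ℝ) (hL : 0 < L) (a : ℝ) :
    (∫ z, (1 / L) * K (z / L) * (Real.exp (a * z) - 1))
      = ∫ w, K w * (Real.exp ((a*L) * w) - 1) := by
  have h1 : (fun z => (1/L) * K (z/L) * (Real.exp (a*z) - 1))
      = fun z => (1/L) * ((fun w => K w * (Real.exp ((a*L)*w) - 1)) (z / L)) := by
    ext z
    have hz : a * z = (a*L) * (z/L) := by field_simp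
    dsimp only
    rw [← hz]
    ring
  rw [h1, MeasureTheory.integral_const_mul,
    MeasureTheory.Measure.integral_comp_div (fun w => K w * (Real.exp ((a*L)*w) - 1)) L,
    smul_eq_mul, abs_of_pos hL]
  field_simp

end Aux3

/-- behaviour of the decay rates `(a_*(L), b_*(L))` of the final epidemic
state for extreme values of the dispersal range `L`:
(i) as `L → +∞`, `a_*(L) → 0`, `b_*(L) → ρ` and `D φ₁(a_*(L) L) → dμρ/(ν + dρ)`;
(ii) as `L → 0⁺`, `a_*(L) → ρ` and `b_*(L) → 0`. -/
theorem decay_rate_extreme_ranges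
    (K : ℝ → ℝ) (hK_even : ∀ x, K (-x) = K x) (hK_smooth : ContDiff ℝ (⊤ : ℕ∞) K)
    (hK_nonneg : ∀ x, 0 ≤ K x) (hK_supp : ∀ x, x ∉ Icc (-1 : ℝ) 1 → K x = 0)
    (hK_mass : ∫ x, K x = 1)
    (d D μ ν ρ : ℝ) (hd : 0 < d) (hD : 0 < D) (hμ : 0 < μ) (hν : 0 < ν) (hρ : 0 < ρ)
    (Φ : ℝ → ℝ → ℝ)
    (hΦ : ∀ L : ℝ, 0 < L → ∀ a : ℝ,
      Φ L a = ∫ z, (1 / L) * K (z / L) * (Real.exp (a * z) - 1))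
    (astar bstar : ℝ → ℝ)
    (hsol : ∀ L : ℝ, 0 < L →
      0 < astar L
      ∧ -(ν / d) < bstar L
      ∧ bstar L = (ν / d) * (μ / (μ - D * Φ L (astar L)) - 1)
      ∧ (astar L) ^ 2 + (bstar L) ^ 2 = ρ ^ 2
      ∧ ∀ a b : ℝ, 0 < a → -(ν / d) < b →
          b = (ν / d) * (μ / (μ - D * Φ L a) - 1) → a ^ 2 + b ^ 2 = ρ ^ 2 →
          a = astar L ∧ b = bstar L) :
    Tendsto astar atTop (nhds 0)
    ∧ Tendsto bstar atTop (nhds ρ)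
    ∧ Tendsto (fun L => D * Φ 1 (astar L * L)) atTop (nhds (d * μ * ρ / (ν + d * ρ)))
    ∧ Tendsto astar (nhdsWithin 0 (Ioi (0 : ℝ))) (nhds ρ)
    ∧ Tendsto bstar (nhdsWithin 0 (Ioi (0 : ℝ))) (nhds 0) := by
  have hKc : Continuous K := hK_smooth.continuous
  set φ : ℝ → ℝ := fun s => ∫ z, K z * (Real.exp (s*z) - 1) with hφdef
  have hscale : ∀ L : ℝ, 0 < L → ∀ a : ℝ, Φ L a = φ (a*L) := by
    intro L hL a
    rw [hΦ L hL a, aux_phi_scale L hL a]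
  have hφ0 : ∀ s, 0 ≤ φ s := fun s => aux_phi_nonneg hKc hK_even hK_nonneg hK_supp s
  have hφmono : ∀ {s t : ℝ}, 0 ≤ s → s ≤ t → φ s ≤ φ t :=
    fun hs hst => aux_phi_mono hKc hK_even hK_nonneg hK_supp hs hst
  have hφup : ∀ s : ℝ, 0 ≤ s → φ s ≤ Real.exp s - 1 :=
    fun s hs => aux_phi_upper hKc hK_nonneg hK_supp hK_mass hs
  set c₀ : ℝ := d * μ * ρ / (D * (ν + d * ρ)) with hc₀def
  have hc₀pos : 0 < c₀ := by positivity
  -- key facts for each L > 0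
  have key : ∀ L : ℝ, 0 < L →
      0 ≤ bstar L ∧ bstar L < ρ ∧ astar L ≤ ρ ∧
      D * φ (astar L * L) = d * μ * bstar L / (ν + d * bstar L) ∧
      φ (astar L * L) ≤ c₀ := by
    intro L hL
    obtain ⟨ha, hb1, hbe, hab, -⟩ := hsol L hL
    rw [hscale L hL (astar L)] at hbe
    set a := astar L with hadef
    set b := bstar L with hbdef
    set t := D * φ (a * L) with htdef
    have hνdb : 0 < ν + d * b := by
      have h2 := mul_lt_mul_of_pos_left hb1 hd
      have h3 : d * (ν / d) = ν := by field_simp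
      rw [mul_neg, h3] at h2
      linarith
    have ht0 : 0 ≤ t := mul_nonneg hD.le (hφ0 _)
    have hm : μ - t ≠ 0 := by
      intro h
      rw [h, div_zero] at hbe
      simp only [zero_sub, mul_neg, mul_one] at hbe
      rw [hbe] at hb1
      exact lt_irrefl _ hb1
    have heq : t * (ν + d * b) = d * μ * b := by
      have h1 : b * d * (μ - t) = ν * t := by
        calc b * d * (μ - t) = ((ν/d) * (μ/(μ - t) - 1)) * d * (μ - t) := by rw [← hbe]
          _ = ν * t := by field_simp; ring
      nlinarith [h1]
    have hb0 : 0 ≤ b := by nlinarith [mul_nonneg ht0 hνdb.le, mul_pos hd hμ]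
    have hbρ : b < ρ := by nlinarith [ha]
    have haρ : a ≤ ρ := by nlinarith [ha, sq_nonneg b]
    have htval : t = d * μ * b / (ν + d * b) := by
      rw [eq_div_iff hνdb.ne']
      exact heq
    refine ⟨hb0, hbρ, haρ, htval, ?_⟩
    have htle : t ≤ d * μ * ρ / (ν + d * ρ) := by
      rw [htval, div_le_div_iff₀ hνdb (by positivity)]
      nlinarith [mul_nonneg (mul_nonneg (mul_nonneg hd.le hμ.le) hν.le)
        (sub_nonneg.2 hbρ.le)]
    calc φ (a * L) = (D * φ (a * L)) / D := by field_simp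
      _ ≤ (d * μ * ρ / (ν + d * ρ)) / D := by gcongr
      _ = c₀ := by rw [hc₀def]; field_simp
  -- Limit 1 : astar → 0 at atTop
  obtain ⟨s₀, hs₀pos, hs₀⟩ := aux_phi_unbounded hKc hK_even hK_nonneg hK_supp hK_mass c₀
  have lim1 : Tendsto astar atTop (nhds 0) := by
    have hub : Tendsto (fun L : ℝ => s₀ / L) atTop (nhds 0) :=
      tendsto_const_nhds.div_atTop tendsto_id
    refine tendsto_of_tendsto_of_tendsto_of_le_of_le' tendsto_const_nhds hub ?_ ?_
    · exact (eventually_gt_atTop 0).mono fun L hL => (hsol L hL).1.le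
    · refine (eventually_gt_atTop 0).mono fun L hL => ?_
      have hbound : astar L * L < s₀ := by
        by_contra h
        push_neg at h
        have := hφmono hs₀pos.le h
        exact absurd (lt_of_lt_of_le hs₀ (le_trans this (key L hL).2.2.2.2)) (lt_irrefl _)
      rw [le_div_iff₀ hL]
      exact hbound.le
  -- Limit 2 : bstar → ρ at atTop
  have hbsqrt : ∀ L : ℝ, 0 < L → bstar L = Real.sqrt (ρ^2 - (astar L)^2) := by
    intro L hL
    obtain ⟨-, -, -, hab, -⟩ := hsol L hL
    have hb0 := (key L hL).1
    rw [show ρ^2 - (astar L)^2 = (bstar L)^2 by linarith, Real.sqrt_sq hb0]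
  have lim2 : Tendsto bstar atTop (nhds ρ) := by
    have h1 : Tendsto (fun L => ρ^2 - (astar L)^2) atTop (nhds (ρ^2 - 0^2)) :=
      tendsto_const_nhds.sub (lim1.pow 2)
    have h2 := h1.sqrt
    rw [show ρ^2 - 0^2 = ρ^2 by ring, Real.sqrt_sq hρ.le] at h2
    refine h2.congr' ?_
    exact (eventually_gt_atTop 0).mono fun L hL => (hbsqrt L hL).symm
  refine ⟨lim1, lim2, ?_, ?_, ?_⟩
  -- Limit 3
  · have h1 : Tendsto (fun L => d * μ * bstar L / (ν + d * bstar L)) atTop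
        (nhds (d * μ * ρ / (ν + d * ρ))) := by
      apply Tendsto.div ((tendsto_const_nhds (x := d*μ)).mul lim2)
        (tendsto_const_nhds.add ((tendsto_const_nhds (x := d)).mul lim2))
      positivity
    refine h1.congr' ?_
    refine (eventually_gt_atTop 0).mono fun L hL => ?_
    have h2 : Φ 1 (astar L * L) = φ (astar L * L) := by
      rw [hscale 1 one_pos (astar L * L), mul_one]
    dsimp only
    rw [h2]
    exact ((key L hL).2.2.2.1).symm
  -- Limits 4 and 5
  all_goals {
  have hev : ∀ᶠ (L:ℝ) in nhdsWithin 0 (Ioi 0), 0 < L := eventually_mem_nhdsWithin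
  have hT : Tendsto (fun L => D * φ (astar L * L)) (nhdsWithin 0 (Ioi 0)) (nhds 0) := by
    have hc : Continuous (fun L : ℝ => D * (Real.exp (ρ * L) - 1)) :=
      continuous_const.mul ((Real.continuous_exp.comp
        (continuous_const.mul continuous_id)).sub continuous_const)
    have hub : Tendsto (fun L : ℝ => D * (Real.exp (ρ * L) - 1))
        (nhdsWithin 0 (Ioi 0)) (nhds 0) := by
      have h0 := (hc.tendsto 0).mono_left (nhdsWithin_le_nhds (s := Ioi (0:ℝ)))
      simpa using h0
    refine tendsto_of_tendsto_of_tendsto_of_le_of_le' tendsto_const_nhds hub ?_ ?_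
    · exact Eventually.of_forall fun L => mul_nonneg hD.le (hφ0 _)
    · refine hev.mono fun L hL => ?_
      have ha := (hsol L hL).1
      have haρ := (key L hL).2.2.1
      have h1 : astar L * L ≤ ρ * L := mul_le_mul_of_nonneg_right haρ hL.le
      have h2 : φ (astar L * L) ≤ Real.exp (ρ * L) - 1 := by
        refine le_trans (hφup _ (by positivity)) ?_
        have := Real.exp_le_exp.2 h1
        linarith
      exact mul_le_mul_of_nonneg_left h2 hD.le
  have lim5 : Tendsto bstar (nhdsWithin 0 (Ioi 0)) (nhds 0) := by
    have hfc : ContinuousAt (fun x : ℝ => (ν/d) * (μ/(μ - x) - 1)) 0 := by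
      apply ContinuousAt.mul continuousAt_const
      apply ContinuousAt.sub ?_ continuousAt_const
      apply ContinuousAt.div continuousAt_const (continuousAt_const.sub continuousAt_id)
      simpa using hμ.ne'
    have h3 := hfc.tendsto.comp hT
    have h4 : ν / d * (μ / (μ - 0) - 1) = 0 := by
      simp [div_self hμ.ne']
    rw [h4] at h3
    refine h3.congr' (hev.mono fun L hL => ?_)
    obtain ⟨-, -, hbe, -, -⟩ := hsol L hL
    rw [hscale L hL (astar L)] at hbe
    simp only [Function.comp_apply]
    exact hbe.symm
  have lim4 : Tendsto astar (nhdsWithin 0 (Ioi 0)) (nhds ρ) := by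
    have h1 : Tendsto (fun L => ρ^2 - (bstar L)^2) (nhdsWithin 0 (Ioi 0))
        (nhds (ρ^2 - 0^2)) := tendsto_const_nhds.sub (lim5.pow 2)
    have h2 := h1.sqrt
    rw [show ρ^2 - 0^2 = ρ^2 by ring, Real.sqrt_sq hρ.le] at h2
    refine h2.congr' (hev.mono fun L hL => ?_)
    obtain ⟨ha, -, -, hab, -⟩ := hsol L hL
    rw [show ρ^2 - (bstar L)^2 = (astar L)^2 by linarith, Real.sqrt_sq ha.le]
  first | exact lim4 | exact lim5 }
end

section
/- (Pure transport on the road, algebraic form.) Let d, μ, ν, r > 0, c_K := 2√(dr), and q ∈ ℝ. (i) If q ≤ c_K, then for c > 0 the system of inequalities { (c − q)·a ≥ −dμb/(ν + db) , c·a − d(a² + b²) ≥ r } admits a solution (a,b) with a > 0, b > −ν/d if and only if c ≥ c_K. (ii) If q > c_K, then the set of c for which the system of equations { (c − q)·a = −dμb/(ν + db) , c·a − d(a² + b²) = r } has a solution (a,b) with a > 0, b > −ν/d is nonempty and has a minimum c_*(q) satisfying c_K < c_*(q) < q. -/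
open Set

set_option maxHeartbeats 1000000

/-- pure transport on the road, algebraic form:
(i) if `q ≤ c_K`, the system of inequalities
`{ (c - q) a ≥ -dμb/(ν + db) , c a - d(a² + b²) ≥ r }` has a solution with `a > 0`,
`b > -ν/d` iff `c ≥ c_K`;
(ii) if `q > c_K`, the set of `c` for which the corresponding system of equations has such a
solution is nonempty and has a minimum `c_*(q)` with `c_K < c_*(q) < q`. -/
theorem pure_transport_plane_waves
    (d μ ν r : ℝ) (hd : 0 < d) (hμ : 0 < μ) (hν : 0 < ν) (hr : 0 < r)
    (cK : ℝ) (hcK : cK = 2 * Real.sqrt (d * r))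
    (q : ℝ) :
    (q ≤ cK → ∀ c : ℝ, 0 < c →
      ((∃ a b : ℝ, 0 < a ∧ -(ν / d) < b
          ∧ -(d * μ * b / (ν + d * b)) ≤ (c - q) * a
          ∧ r ≤ c * a - d * (a ^ 2 + b ^ 2))
        ↔ cK ≤ c))
    ∧ (cK < q →
        ∃ cstar : ℝ, cK < cstar ∧ cstar < q ∧
          IsLeast {c : ℝ | ∃ a b : ℝ, 0 < a ∧ -(ν / d) < b
            ∧ (c - q) * a = -(d * μ * b / (ν + d * b))
            ∧ c * a - d * (a ^ 2 + b ^ 2) = r} cstar) := by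
  have hdr : 0 < d * r := mul_pos hd hr
  obtain ⟨s, hsdef⟩ : ∃ s : ℝ, s = Real.sqrt (d * r) := ⟨_, rfl⟩
  have hs2 : s ^ 2 = d * r := by rw [hsdef]; exact Real.sq_sqrt hdr.le
  have hs0 : 0 < s := by rw [hsdef]; exact Real.sqrt_pos.mpr hdr
  have hcKs : cK = 2 * s := by rw [hcK, hsdef]
  have hcK0 : 0 < cK := by rw [hcKs]; positivity
  have hνd0 : -(ν / d) < 0 := neg_lt_zero.mpr (by positivity)
  -- key lower bound: c·a ≥ r + d a² (a > 0) forces c ≥ cK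
  have key : ∀ c a : ℝ, 0 < a → r + d * a ^ 2 ≤ c * a → cK ≤ c := by
    intro c a ha h
    rw [hcKs]
    have hmul : d * (r + d * a ^ 2) ≤ d * (c * a) :=
      mul_le_mul_of_nonneg_left h hd.le
    nlinarith only [hmul, sq_nonneg (d * a - s), hs2, mul_pos hd ha]
  constructor
  · -- Part (i)
    intro hq c _hc
    constructor
    · rintro ⟨a, b, ha, _hb, _h1, h2⟩
      exact key c a ha (by
        linarith only [h2, mul_nonneg hd.le (sq_nonneg b)])
    · intro hcKc
      have hc0 : 0 < c := lt_of_lt_of_le hcK0 hcKc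
      have hcKc' : 2 * s ≤ c := by rw [← hcKs]; exact hcKc
      refine ⟨c / (2 * d), 0, by positivity, hνd0, ?_, ?_⟩
      · have h0 : 0 ≤ (c - q) * (c / (2 * d)) :=
          mul_nonneg (by linarith only [hq, hcKc]) (by positivity)
        simpa using h0
      · have hc2 : 4 * (d * r) ≤ c ^ 2 := by
          nlinarith only [hcKc', hs0, hs2]
        have heq : c * (c / (2 * d)) - d * ((c / (2 * d)) ^ 2 + 0 ^ 2)
            = c ^ 2 / (4 * d) := by
          field_simp; ring
        rw [heq, le_div_iff₀ (by positivity : (0:ℝ) < 4 * d)]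
        linarith only [hc2]
  · -- Part (ii)
    intro hq
    have hq0 : 0 < q := lt_trans hcK0 hq
    have hqs : 2 * s < q := by rw [← hcKs]; exact hq
    have hq2 : 4 * (d * r) < q ^ 2 := by nlinarith only [hqs, hs0, hs2]
    -- construction of c₁ < q in S via IVT
    obtain ⟨a₀, ha₀def⟩ : ∃ a₀ : ℝ, a₀ = q / (2 * d) := ⟨_, rfl⟩
    have ha₀ : 0 < a₀ := by rw [ha₀def]; positivity
    have ha₀q : 2 * d * a₀ = q := by rw [ha₀def]; field_simp
    obtain ⟨P, hPdef⟩ : ∃ P : ℝ, P = r + d * a₀ ^ 2 - q * a₀ := ⟨_, rfl⟩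
    have hP : P < 0 := by
      rw [hPdef]
      nlinarith only [ha₀q, hq2, hd, hr, ha₀]
    obtain ⟨B, hBdef⟩ : ∃ B : ℝ, B = Real.sqrt ((1 - P) / d) := ⟨_, rfl⟩
    have hB0 : 0 ≤ B := by rw [hBdef]; exact Real.sqrt_nonneg _
    have hB2 : d * B ^ 2 = 1 - P := by
      rw [hBdef, Real.sq_sqrt (div_nonneg (by linarith only [hP]) hd.le)]
      field_simp
    obtain ⟨H, hHdef⟩ : ∃ H : ℝ → ℝ,
        H = fun b => (P + d * b ^ 2) * (ν + d * b) + d * μ * b := ⟨_, rfl⟩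
    have hHval : ∀ b : ℝ, H b = (P + d * b ^ 2) * (ν + d * b) + d * μ * b := by
      intro b; rw [hHdef]
    have hH0 : H 0 < 0 := by
      rw [hHval 0]
      nlinarith only [mul_pos (neg_pos.mpr hP) hν]
    have hHB : 0 < H B := by
      rw [hHval B]
      nlinarith only [hB2, hν, mul_nonneg hd.le hB0,
        mul_nonneg (mul_pos hd hμ).le hB0]
    have hcont : ContinuousOn H (Icc 0 B) := by
      rw [hHdef]; fun_prop
    obtain ⟨b₁, hb₁mem, hb₁⟩ :=
      intermediate_value_Icc hB0 hcont ⟨hH0.le, hHB.le⟩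
    have hb₁pos : 0 < b₁ := by
      rcases lt_or_eq_of_le hb₁mem.1 with h | h
      · exact h
      · exfalso; rw [← h] at hb₁; exact hH0.ne hb₁
    have hν₁ : 0 < ν + d * b₁ := by positivity
    obtain ⟨c₁, hc₁def⟩ : ∃ c₁ : ℝ, c₁ = (r + d * (a₀ ^ 2 + b₁ ^ 2)) / a₀ := ⟨_, rfl⟩
    have hc₁eq2 : c₁ * a₀ - d * (a₀ ^ 2 + b₁ ^ 2) = r := by
      rw [hc₁def]; field_simp; ring
    have hc₁a : (c₁ - q) * a₀ = P + d * b₁ ^ 2 := by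
      rw [hPdef]; linear_combination hc₁eq2
    have hH₁ : (P + d * b₁ ^ 2) * (ν + d * b₁) = -(d * μ * b₁) := by
      have h := hb₁; rw [hHval b₁] at h; linarith only [h]
    have hc₁eq1 : (c₁ - q) * a₀ = -(d * μ * b₁ / (ν + d * b₁)) := by
      have hdiv : d * μ * b₁ / (ν + d * b₁) = -(P + d * b₁ ^ 2) := by
        rw [div_eq_iff hν₁.ne']; linarith only [hH₁]
      rw [hc₁a, hdiv, neg_neg]
    have hPb₁neg : P + d * b₁ ^ 2 < 0 := by
      nlinarith only [hH₁, mul_pos (mul_pos hd hμ) hb₁pos, hν₁]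
    have hc₁q : c₁ < q := by
      nlinarith only [hc₁a, hPb₁neg, ha₀]
    -- membership of c₁
    have hc₁S : ∃ a b : ℝ, 0 < a ∧ -(ν / d) < b
        ∧ (c₁ - q) * a = -(d * μ * b / (ν + d * b))
        ∧ c₁ * a - d * (a ^ 2 + b ^ 2) = r :=
      ⟨a₀, b₁, ha₀, lt_trans hνd0 hb₁pos, hc₁eq1, hc₁eq2⟩
    -- compactness setup
    obtain ⟨K, hKdef⟩ : ∃ K : Set (ℝ × ℝ × ℝ),
        K = (Icc cK q ×ˢ Icc (r / q) (q / d) ×ˢ Icc 0 (q / d)) ∩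
          {x : ℝ × ℝ × ℝ | (x.1 - q) * x.2.1 * (ν + d * x.2.2) + d * μ * x.2.2 = 0
            ∧ x.1 * x.2.1 - d * (x.2.1 ^ 2 + x.2.2 ^ 2) - r = 0} := ⟨_, rfl⟩
    have hKmem : ∀ x : ℝ × ℝ × ℝ, x ∈ K ↔
        (cK ≤ x.1 ∧ x.1 ≤ q) ∧ (r / q ≤ x.2.1 ∧ x.2.1 ≤ q / d)
          ∧ (0 ≤ x.2.2 ∧ x.2.2 ≤ q / d)
          ∧ (x.1 - q) * x.2.1 * (ν + d * x.2.2) + d * μ * x.2.2 = 0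
          ∧ x.1 * x.2.1 - d * (x.2.1 ^ 2 + x.2.2 ^ 2) - r = 0 := by
      intro x
      rw [hKdef]
      simp only [Set.mem_inter_iff, Set.mem_prod, Set.mem_Icc, Set.mem_setOf_eq]
      tauto
    have hKcomp : IsCompact K := by
      rw [hKdef]
      apply IsCompact.inter_right
      · exact isCompact_Icc.prod (isCompact_Icc.prod isCompact_Icc)
      · apply IsClosed.inter
        · exact isClosed_eq (by fun_prop) continuous_const
        · exact isClosed_eq (by fun_prop) continuous_const
    -- every c in S with c ≤ q lies in the projection of K
    have hmem : ∀ c : ℝ, (∃ a b : ℝ, 0 < a ∧ -(ν / d) < b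
        ∧ (c - q) * a = -(d * μ * b / (ν + d * b))
        ∧ c * a - d * (a ^ 2 + b ^ 2) = r) → c ≤ q → c ∈ Prod.fst '' K := by
      rintro c ⟨a, b, ha, hb, h1, h2⟩ hcq
      have hb' : -ν / d < b := by rw [neg_div]; exact hb
      have hbd : -ν < b * d := (div_lt_iff₀ hd).mp hb'
      have hνdb : 0 < ν + d * b := by linarith only [hbd]
      have hc0 : 0 < c := by
        nlinarith only [h2, mul_nonneg hd.le (sq_nonneg a),
          mul_nonneg hd.le (sq_nonneg b), hr, ha]
      have hb0 : 0 ≤ b := by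
        have hle : (c - q) * a ≤ 0 :=
          mul_nonpos_of_nonpos_of_nonneg (by linarith only [hcq]) ha.le
        rw [h1] at hle
        have hdivnn : 0 ≤ d * μ * b / (ν + d * b) := by linarith only [hle]
        rcases div_nonneg_iff.mp hdivnn with ⟨h, _⟩ | ⟨_, h⟩
        · nlinarith only [h, mul_pos hd hμ]
        · linarith only [h, hνdb]
      have hcKc : cK ≤ c := key c a ha
        (by linarith only [h2, mul_nonneg hd.le (sq_nonneg b)])
      have had : a * d ≤ q := by
        nlinarith only [h2, hcq, ha, hr, mul_nonneg hd.le (sq_nonneg b), hc0]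
      have hale : a ≤ q / d := (le_div_iff₀ hd).mpr had
      have hage : r / q ≤ a := by
        rw [div_le_iff₀ hq0]
        nlinarith only [h2, hcq, ha, mul_nonneg hd.le (sq_nonneg a),
          mul_nonneg hd.le (sq_nonneg b)]
      have hsq : (b * d) ^ 2 ≤ q ^ 2 := by
        have h2d : d * (c * a) - d * (d * (a ^ 2 + b ^ 2)) = d * r := by
          linear_combination d * h2
        nlinarith only [h2d, had, hcq, hc0, hd, hr, ha,
          mul_nonneg hd.le (sq_nonneg a), sq_nonneg (d * a), mul_pos hd hr,
          mul_le_mul_of_nonneg_left had hc0.le]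
      have hble : b ≤ q / d := by
        rw [le_div_iff₀ hd]
        nlinarith only [hsq, hq0, mul_nonneg hb0 hd.le]
      refine ⟨(c, a, b), ?_, rfl⟩
      rw [hKmem]
      refine ⟨⟨hcKc, hcq⟩, ⟨hage, hale⟩, ⟨hb0, hble⟩, ?_, by linarith only [h2]⟩
      have h1' : (c - q) * a * (ν + d * b) = -(d * μ * b) := by
        rw [h1]; field_simp
      linarith only [h1']
    have himg : (Prod.fst '' K).Nonempty := ⟨c₁, hmem c₁ hc₁S hc₁q.le⟩
    obtain ⟨cstar, hstar⟩ := (hKcomp.image continuous_fst).exists_isLeast himg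
    have hstarle : cstar ≤ c₁ := hstar.2 (hmem c₁ hc₁S hc₁q.le)
    have hstarq : cstar < q := lt_of_le_of_lt hstarle hc₁q
    -- cstar is in S
    have hstarS : ∃ a b : ℝ, 0 < a ∧ -(ν / d) < b
        ∧ (cstar - q) * a = -(d * μ * b / (ν + d * b))
        ∧ cstar * a - d * (a ^ 2 + b ^ 2) = r := by
      obtain ⟨x, hxK, hfst⟩ := hstar.1
      rw [hKmem] at hxK
      obtain ⟨⟨_, _⟩, ⟨hage, _⟩, ⟨hb0, _⟩, hF, hG⟩ := hxK
      obtain ⟨c', a, b⟩ := x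
      simp only at hfst hage hb0 hF hG
      rw [hfst] at hF hG
      have ha : 0 < a := lt_of_lt_of_le (by positivity) hage
      have hνdb : 0 < ν + d * b := by positivity
      refine ⟨a, b, ha, lt_of_lt_of_le hνd0 hb0, ?_, by linarith only [hG]⟩
      have hdiv : d * μ * b / (ν + d * b) = -((cstar - q) * a) := by
        rw [div_eq_iff hνdb.ne']; linear_combination hF
      rw [hdiv, neg_neg]
    refine ⟨cstar, ?_, hstarq, hstarS, ?_⟩
    · -- cK < cstar
      obtain ⟨a, b, ha, hb, h1, h2⟩ := hstarS
      have hbne : b ≠ 0 := by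
        intro hb0
        rw [hb0] at h1
        have hza : (cstar - q) * a = 0 := by simpa using h1
        rcases mul_eq_zero.mp hza with h | h
        · linarith only [h, hstarq]
        · exact ha.ne' h
      have hb2 : 0 < b ^ 2 := by positivity
      have hcKle : cK ≤ cstar := key cstar a ha
        (by linarith only [h2, mul_nonneg hd.le (sq_nonneg b)])
      rcases lt_or_eq_of_le hcKle with h | h
      · exact h
      · exfalso
        have h2' : 2 * s * a - d * (a ^ 2 + b ^ 2) = r := by
          rw [← hcKs, h]; linarith only [h2]
        have h2d : 2 * s * a * d - d ^ 2 * (a ^ 2 + b ^ 2) = d * r := by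
          linear_combination d * h2'
        have hdb2 : 0 < d ^ 2 * b ^ 2 := by positivity
        linarith only [h2d, sq_nonneg (d * a - s), hs2, hdb2]
    · -- lower bound
      intro c hc
      by_cases hcq : c ≤ q
      · exact hstar.2 (hmem c hc hcq)
      · linarith only [hcq, hstarq]
end
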